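/- arXiv:2305.14110 — 8 statements merged into one kernel-verified Lean document; each statement's English description precedes it below -/
import Mathlib

section
/- Let A = (A_1, …, A_m) be a POVM on ℂ^d with all elements nonzero, and let B = (B_1, …, B_n) be a PVM with all elements nonzero. Suppose there is a real matrix Λ with nonnegative entries satisfying Σ_k Λ_{kj} = 1 for every j and B_k = Σ_j Λ_{kj} A_j for every k. Then every entry of Λ is either 0 or 1, and moreover Λ_{kj} = Λ_{kj'} for every k whenever j and j' lie in the same connected component of the transition graph of A (i.e., every PVM that is a coarse graining of A is a grouping of the components of A). -/
open Matrix
open scoped ComplexOrder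

def IsPOVM {d m : ℕ} (A : Fin m → Matrix (Fin d) (Fin d) ℂ) : Prop :=
  (∀ j, (A j).PosSemidef) ∧ ∑ j, A j = 1

def IsPVM {d m : ℕ} (A : Fin m → Matrix (Fin d) (Fin d) ℂ) : Prop :=
  IsPOVM A ∧ (∀ j, A j * A j = A j) ∧ ∀ j k, j ≠ k → A j * A k = 0

/-- Transition graph of a POVM: distinct `j, k` adjacent iff `tr(A_j A_k) ≠ 0`. -/
def transitionGraph {d m : ℕ} (A : Fin m → Matrix (Fin d) (Fin d) ℂ) :
    SimpleGraph (Fin m) where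
  Adj j k := j ≠ k ∧ (A j * A k).trace ≠ 0
  symm := by
    constructor
    intro j k h
    exact ⟨h.1.symm, by rw [Matrix.trace_mul_comm]; exact h.2⟩
  loopless := by constructor; intro j h; exact h.1 rfl

/-! Since `tr(A_j A_j') ≥ 0` for positive semidefinite `A_j`, the expansion
`0 = tr(B_k B_k') = ∑_{j,j'} Λ_{kj} Λ_{k'j'} tr(A_j A_j')` for `k ≠ k'` is a sum of nonnegative
terms, so each of them vanishes. With `j = j'` (where `tr(A_j²) > 0`) this says that column `j`
of `Λ` has at most one nonzero entry, which must then be `1`; with `j, j'` adjacent it says that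
columns `j` and `j'` have their `1` in the same row. -/

open scoped MatrixOrder

namespace Matrix

variable {n 𝕜 : Type*} [Fintype n] [RCLike 𝕜]

theorem PosSemidef.trace_mul_nonneg {X Y : Matrix n n 𝕜} (hX : X.PosSemidef)
    (hY : Y.PosSemidef) : 0 ≤ (X * Y).trace := by
  classical
  obtain ⟨S, rfl⟩ := CStarAlgebra.nonneg_iff_eq_star_mul_self.mp hX.nonneg
  rw [star_eq_conjTranspose, Matrix.mul_assoc, trace_mul_comm]
  exact (hY.mul_mul_conjTranspose_same S).trace_nonneg

theorem IsHermitian.trace_mul_self_eq_zero_iff {R : Type*} [PartialOrder R] [NonUnitalRing R]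
    [StarRing R] [StarOrderedRing R] [NoZeroDivisors R] {X : Matrix n n R}
    (hX : X.IsHermitian) : (X * X).trace = 0 ↔ X = 0 := by
  simpa only [hX.eq] using trace_conjTranspose_mul_self_eq_zero_iff (A := X)

theorem trace_sum_smul_mul_sum_smul {ι R : Type*} [Fintype ι] [CommSemiring R]
    (A : ι → Matrix n n R) (a b : ι → R) :
    ((∑ i, a i • A i) * ∑ j, b j • A j).trace = ∑ i, ∑ j, a i * b j * (A i * A j).trace := by
  simp only [Finset.sum_mul_sum, trace_sum, Matrix.smul_mul, Matrix.mul_smul, smul_smul, trace_smul,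
    smul_eq_mul, mul_comm (b _) (a _)]

theorem PosSemidef.mul_mul_trace_eq_zero_of_trace_sum_smul_mul_eq_zero {ι : Type*} [Fintype ι]
    {A : ι → Matrix n n 𝕜} (hA : ∀ i, (A i).PosSemidef) {a b : ι → 𝕜}
    (ha : ∀ i, 0 ≤ a i) (hb : ∀ j, 0 ≤ b j)
    (h : ((∑ i, a i • A i) * ∑ j, b j • A j).trace = 0) (i j : ι) :
    a i * b j * (A i * A j).trace = 0 := by
  have hterm : ∀ i j, 0 ≤ a i * b j * (A i * A j).trace := fun i j =>
    mul_nonneg (mul_nonneg (ha i) (hb j)) ((hA i).trace_mul_nonneg (hA j))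
  rw [trace_sum_smul_mul_sum_smul, Fintype.sum_eq_zero_iff_of_nonneg
    fun i => Fintype.sum_nonneg (hterm i)] at h
  exact (Fintype.sum_eq_zero_iff_of_nonneg (hterm i)).mp (congrFun h i) |> (congrFun · j)

end Matrix

theorem exists_eq_pi_single_of_sum_eq_one {κ M : Type*} [Fintype κ] [DecidableEq κ]
    [AddCommMonoidWithOne M] [NeZero (1 : M)] {c : κ → M} (hc : ∑ k, c k = 1)
    (hdisj : Pairwise fun k k' => c k = 0 ∨ c k' = 0) : ∃ k, c = Pi.single k 1 := by
  obtain ⟨k, hk⟩ : ∃ k, c k ≠ 0 := by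
    by_contra! h
    simp [h] at hc
  have hzero : ∀ k', k' ≠ k → c k' = 0 := fun k' hk' => (hdisj hk'.symm).resolve_left hk
  refine ⟨k, funext fun k' => ?_⟩
  rcases eq_or_ne k' k with rfl | hk'
  · rwa [Pi.single_eq_same, ← Fintype.sum_eq_single k' hzero]
  · rw [Pi.single_eq_of_ne hk', hzero k' hk']

theorem SimpleGraph.Reachable.apply_eq_of_adj {V β : Type*} {G : SimpleGraph V} {f : V → β}
    (hf : ∀ u v, G.Adj u v → f u = f v) {u v : V} (h : G.Reachable u v) : f u = f v := by
  obtain ⟨p⟩ := h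
  induction p with
  | nil => rfl
  | cons hadj _ ih => exact (hf _ _ hadj).trans ih

theorem stmt_0_general {d m n : ℕ}
    (A : Fin m → Matrix (Fin d) (Fin d) ℂ) (B : Fin n → Matrix (Fin d) (Fin d) ℂ)
    (hA : IsPOVM A) (hA0 : ∀ j, A j ≠ 0)
    (hB : IsPVM B)
    (Λ : Fin n → Fin m → ℝ)
    (hΛnonneg : ∀ k j, 0 ≤ Λ k j)
    (hΛstoch : ∀ j, ∑ k, Λ k j = 1)
    (hcoarse : ∀ k, B k = ∑ j, (Λ k j : ℂ) • A j) :
    (∀ k j, Λ k j = 0 ∨ Λ k j = 1) ∧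
    (∀ k j j', (transitionGraph A).Reachable j j' → Λ k j = Λ k j') := by
  have horth : ∀ k k', k ≠ k' → ∀ j j', (Λ k j : ℂ) * Λ k' j' * (A j * A j').trace = 0 :=
    fun k k' hkk' => PosSemidef.mul_mul_trace_eq_zero_of_trace_sum_smul_mul_eq_zero hA.1
      (fun j => Complex.zero_le_real.mpr (hΛnonneg k j))
      (fun j => Complex.zero_le_real.mpr (hΛnonneg k' j))
      (by rw [← hcoarse, ← hcoarse, hB.2.2 k k' hkk', trace_zero])
  have hcol : ∀ j, ∃ k, (Λ · j) = Pi.single k 1 := fun j =>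
    exists_eq_pi_single_of_sum_eq_one (hΛstoch j) fun k k' hkk' => by
      simpa [(hA.1 j).isHermitian.trace_mul_self_eq_zero_iff, hA0 j] using horth k k' hkk' j j
  refine ⟨fun k j => ?_, fun k j j' h => congrFun (h.apply_eq_of_adj (f := fun j k => Λ k j) ?_) k⟩
  · obtain ⟨k₀, hk₀⟩ := hcol j
    rw [congrFun hk₀ k]
    rcases eq_or_ne k k₀ with rfl | hk
    · simp
    · simp [hk]
  · intro j j' hadj
    obtain ⟨k, hk⟩ := hcol j
    obtain ⟨k', hk'⟩ := hcol j'
    obtain rfl : k = k' := by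
      by_contra hne
      simpa [congrFun hk k, congrFun hk' k', hadj.2] using horth k k' hne j j'
    exact hk.trans hk'.symm

/-- Every PVM that is a coarse graining of a POVM `A` is a grouping of the
components of `A`: the stochastic matrix has 0/1 entries, constant on the
connected components of the transition graph of `A`. -/
theorem stmt_0 {d m n : ℕ}
    (A : Fin m → Matrix (Fin d) (Fin d) ℂ) (B : Fin n → Matrix (Fin d) (Fin d) ℂ)
    (hA : IsPOVM A) (hA0 : ∀ j, A j ≠ 0)
    (hB : IsPVM B) (hB0 : ∀ k, B k ≠ 0)
    (Λ : Fin n → Fin m → ℝ)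
    (hΛnonneg : ∀ k j, 0 ≤ Λ k j)
    (hΛstoch : ∀ j, ∑ k, Λ k j = 1)
    (hcoarse : ∀ k, B k = ∑ j, (Λ k j : ℂ) • A j) :
    (∀ k j, Λ k j = 0 ∨ Λ k j = 1) ∧
    (∀ k j j', (transitionGraph A).Reachable j j' → Λ k j = Λ k j') :=
  stmt_0_general A B hA hA0 hB Λ hΛnonneg hΛstoch hcoarse
end

section
/- Let A = (A_1, …, A_m) be a POVM on ℂ^d with all elements nonzero, let C_1, …, C_γ be the connected components of the transition graph of A, and set P_α := Σ_{j ∈ C_α} A_j. Then (P_1, …, P_γ) is a PVM: each P_α is an orthogonal projection, P_α P_β = 0 for α ≠ β, and Σ_α P_α = I. In particular γ(A) ≤ d. -/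
open Matrix
open scoped ComplexOrder

/-- Number of connected components of the transition graph. -/
noncomputable def gammaPOVM {d m : ℕ} (A : Fin m → Matrix (Fin d) (Fin d) ℂ) : ℕ :=
  Nat.card (transitionGraph A).ConnectedComponent

/-!
For positive semidefinite `X = S*S` and `Y = T*T` one has `tr(XY) = ‖S T*‖²` (Frobenius norm),
so `tr(XY) = 0` forces `XY = 0`. Hence POVM elements in different components of the transition
graph multiply to zero, and the component sums are pairwise orthogonal Hermitian matrices adding
up to `1`, which makes each of them idempotent. Each component sum is nonzero, so choosing a
nonzero vector in each of their ranges gives `γ(A)` linearly independent vectors in `ℂ^d`.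
-/

open scoped MatrixOrder

namespace Matrix.PosSemidef

variable {𝕜 n : Type*} [RCLike 𝕜]

theorem mul_eq_zero_of_trace_mul_eq_zero [Fintype n] [DecidableEq n] {X Y : Matrix n n 𝕜}
    (hX : X.PosSemidef) (hY : Y.PosSemidef) (h : (X * Y).trace = 0) : X * Y = 0 := by
  obtain ⟨S, rfl⟩ := CStarAlgebra.nonneg_iff_eq_star_mul_self.mp hX.nonneg
  obtain ⟨T, rfl⟩ := CStarAlgebra.nonneg_iff_eq_star_mul_self.mp hY.nonneg
  simp only [star_eq_conjTranspose] at h ⊢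
  have hST : S * Tᴴ = 0 := by
    rw [← trace_conjTranspose_mul_self_eq_zero_iff, ← h, conjTranspose_mul,
      conjTranspose_conjTranspose, Matrix.mul_assoc, trace_mul_comm]
    simp only [Matrix.mul_assoc]
  rw [Matrix.mul_assoc, ← Matrix.mul_assoc S, hST, Matrix.zero_mul, Matrix.mul_zero]

theorem sum_eq_zero_iff {ι : Type*} {s : Finset ι} {A : ι → Matrix n n 𝕜}
    (hA : ∀ i ∈ s, (A i).PosSemidef) : ∑ i ∈ s, A i = 0 ↔ ∀ i ∈ s, A i = 0 :=
  Finset.sum_eq_zero_iff_of_nonneg fun i hi => (hA i hi).nonneg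

end Matrix.PosSemidef

theorem CompleteOrthogonalIdempotents.of_sum_fiberwise {R ι κ : Type*} [Semiring R] [Fintype ι]
    [Fintype κ] [DecidableEq κ] {A : ι → R} (f : ι → κ) (hA : ∑ j, A j = 1)
    (hAf : ∀ j k, f j ≠ f k → A j * A k = 0) :
    CompleteOrthogonalIdempotents fun c => ∑ j with f j = c, A j := by
  refine CompleteOrthogonalIdempotents.iff_ortho_complete.mpr ⟨fun c c' hcc' => ?_, ?_⟩
  · refine (Finset.sum_mul_sum _ _ _ _).trans <|
      Finset.sum_eq_zero fun j hj => Finset.sum_eq_zero fun k hk => hAf j k ?_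
    rwa [(Finset.mem_filter.mp hj).2, (Finset.mem_filter.mp hk).2]
  · rw [Finset.sum_fiberwise, hA]

theorem OrthogonalIdempotents.card_le_of_ne_zero {K n I : Type*} [Field K] [Fintype n]
    [DecidableEq n] [Fintype I] {e : I → Matrix n n K} (he : OrthogonalIdempotents e)
    (hne : ∀ i, e i ≠ 0) : Fintype.card I ≤ Fintype.card n := by
  have hv : ∀ i, ∃ w, e i *ᵥ w ≠ 0 := fun i => by
    by_contra! h
    exact hne i (Matrix.ext_iff_mulVec.mpr fun w => by rw [h, zero_mulVec])
  choose w hw using hv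
  have hli : LinearIndependent K fun i => e i *ᵥ w i := by
    rw [linearIndependent_iff']
    intro s g hg i hi
    have hgi := congrArg (e i *ᵥ ·) hg
    rw [mulVec_sum, mulVec_zero, Finset.sum_eq_single i (fun j _ hji => by
      rw [mulVec_smul, mulVec_mulVec, he.ortho hji.symm, zero_mulVec, smul_zero]) (absurd hi),
      mulVec_smul, mulVec_mulVec, (he.idem i).eq] at hgi
    exact (smul_eq_zero.mp hgi).resolve_right (hw i)
  simpa using hli.fintype_card_le_finrank

theorem mul_eq_zero_of_transitionGraph_connectedComponentMk_ne {d m : ℕ}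
    {A : Fin m → Matrix (Fin d) (Fin d) ℂ} (hA : ∀ j, (A j).PosSemidef) {j k : Fin m}
    (hjk : (transitionGraph A).connectedComponentMk j ≠
      (transitionGraph A).connectedComponentMk k) :
    A j * A k = 0 := by
  refine (hA j).mul_eq_zero_of_trace_mul_eq_zero (hA k) ?_
  by_contra htr
  exact hjk (SimpleGraph.ConnectedComponent.connectedComponentMk_eq_of_adj
    ⟨fun h => hjk (congrArg _ h), htr⟩)

/-- Summing a POVM over the connected components of its transition graph yields a
PVM; in particular `γ(A) ≤ d`. -/
theorem stmt_1 {d m : ℕ}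
    (A : Fin m → Matrix (Fin d) (Fin d) ℂ)
    (hA : IsPOVM A) (hA0 : ∀ j, A j ≠ 0)
    (P : (transitionGraph A).ConnectedComponent → Matrix (Fin d) (Fin d) ℂ)
    (hP : ∀ c, P c = ∑ᶠ j ∈ {j | (transitionGraph A).connectedComponentMk j = c}, A j) :
    (∀ c, (P c).IsHermitian ∧ P c * P c = P c) ∧
    (∀ c c', c ≠ c' → P c * P c' = 0) ∧
    (∑ᶠ c, P c = 1) ∧
    gammaPOVM A ≤ d := by
  classical
  obtain ⟨hpsd, hsum⟩ := hA
  obtain rfl : P = fun c => ∑ j with (transitionGraph A).connectedComponentMk j = c, A j :=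
    funext fun c => by rw [hP, finsum_mem_eq_toFinset_sum, Set.toFinset_ofPred]
  have hPVM := CompleteOrthogonalIdempotents.of_sum_fiberwise _ hsum
    fun _ _ => mul_eq_zero_of_transitionGraph_connectedComponentMk_ne hpsd
  have hP0 : ∀ c, ∑ j with (transitionGraph A).connectedComponentMk j = c, A j ≠ 0 := by
    intro c
    obtain ⟨j, rfl⟩ := c.exists_rep
    rw [Ne, PosSemidef.sum_eq_zero_iff fun k _ => hpsd k]
    exact fun h => hA0 j (h j (Finset.mem_filter.mpr ⟨Finset.mem_univ j, rfl⟩))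
  refine ⟨fun c => ⟨(posSemidef_sum _ fun j _ => hpsd j).1, (hPVM.idem c).eq⟩,
    fun _ _ hcc' => hPVM.ortho hcc', by rw [finsum_eq_sum_of_fintype, hPVM.complete], ?_⟩
  simpa [gammaPOVM, Nat.card_eq_fintype_card] using hPVM.card_le_of_ne_zero hP0
end

section
/- Let ρ be a state on ℂ^d and A = (A_1, …, A_m) a POVM with all elements nonzero. Then the rank of the linear map F(ρ,A) equals dim span_ℂ{A_1, …, A_m}, and the rank of the composite Ī ∘ F(ρ,A) ∘ Ī equals dim span_ℂ{A_1, …, A_m} − 1. -/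
open Matrix
open scoped ComplexOrder

/-- The Fisher superoperator `F(ρ,A)(C) = Σ_j (tr(A_j C)/tr(ρ A_j)) A_j`. -/
noncomputable def fisherMap {d m : ℕ} (ρ : Matrix (Fin d) (Fin d) ℂ)
    (A : Fin m → Matrix (Fin d) (Fin d) ℂ) :
    Matrix (Fin d) (Fin d) ℂ →ₗ[ℂ] Matrix (Fin d) (Fin d) ℂ where
  toFun C := ∑ j, ((A j * C).trace / (ρ * A j).trace) • A j
  map_add' X Y := by
    simp [Matrix.mul_add, add_div, add_smul, Finset.sum_add_distrib]
  map_smul' c X := by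
    simp [Matrix.mul_smul, Finset.smul_sum, smul_smul, mul_div_assoc]

/-- `Ī`: the orthogonal projection onto traceless matrices, `C ↦ C − (tr C / d)·I`. -/
noncomputable def tracelessProj (d : ℕ) :
    Matrix (Fin d) (Fin d) ℂ →ₗ[ℂ] Matrix (Fin d) (Fin d) ℂ where
  toFun C := C - (C.trace / d) • 1
  map_add' X Y := by
    simp only [Matrix.trace_add, add_div, add_smul]
    abel
  map_smul' c X := by
    simp only [Matrix.trace_smul, smul_eq_mul, RingHom.id_apply, smul_sub, smul_smul,
      mul_div_assoc]

lemma fisherMap_apply {d m : ℕ} (ρ : Matrix (Fin d) (Fin d) ℂ)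
    (A : Fin m → Matrix (Fin d) (Fin d) ℂ) (C : Matrix (Fin d) (Fin d) ℂ) :
    fisherMap ρ A C = ∑ j, ((A j * C).trace / (ρ * A j).trace) • A j := rfl

lemma tracelessProj_apply {d : ℕ} (C : Matrix (Fin d) (Fin d) ℂ) :
    tracelessProj d C = C - (C.trace / d) • 1 := rfl

/-- A nonzero positive semidefinite matrix has positive trace. -/
lemma psd_trace_pos {d : ℕ} {M : Matrix (Fin d) (Fin d) ℂ} (hM : M.PosSemidef)
    (h0 : M ≠ 0) : 0 < M.trace := by
  obtain ⟨B, rfl⟩ : ∃ B : Matrix (Fin d) (Fin d) ℂ, M = Bᴴ * B := by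
    open MatrixOrder in exact CStarAlgebra.nonneg_iff_eq_star_mul_self.mp hM.nonneg
  have htr : (Bᴴ * B).trace = ∑ i, ∑ k, star (B k i) * B k i := by
    simp [Matrix.trace, Matrix.diag, Matrix.mul_apply, Matrix.conjTranspose_apply]
  have hnn : ∀ i ∈ Finset.univ, (0:ℂ) ≤ ∑ k, star (B k i) * B k i :=
    fun i _ => Finset.sum_nonneg fun k _ => star_mul_self_nonneg _
  rw [htr]
  rcases (Finset.sum_nonneg hnn).lt_or_eq with h | h
  · exact h
  · exfalso
    apply h0
    have hB : B = 0 := by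
      ext k i
      have h1 := (Finset.sum_eq_zero_iff_of_nonneg hnn).mp h.symm i (Finset.mem_univ i)
      have h2 := (Finset.sum_eq_zero_iff_of_nonneg
        (fun k _ => star_mul_self_nonneg (B k i))).mp h1 k (Finset.mem_univ k)
      rw [Complex.star_def, ← Complex.normSq_eq_conj_mul_self] at h2
      exact Complex.normSq_eq_zero.mp (by exact_mod_cast h2)
    rw [hB]
    simp

lemma trace_mul_posdef_pos {d : ℕ} {ρ M : Matrix (Fin d) (Fin d) ℂ} (hρ : ρ.PosDef)
    (hM : M.PosSemidef) (h0 : M ≠ 0) : 0 < (ρ * M).trace := by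
  classical
  open MatrixOrder in set S := CFC.sqrt M with hSdef
  have hS : S * S = M := by open MatrixOrder in exact CFC.sqrt_mul_sqrt_self M hM.nonneg
  have hSH : Sᴴ = S := by open MatrixOrder in exact (CFC.sqrt_nonneg M).posSemidef.isHermitian
  have key : (ρ * M).trace = (Sᴴ * ρ * S).trace := by
    rw [hSH, ← hS, ← Matrix.mul_assoc, Matrix.trace_mul_cycle, Matrix.mul_assoc,
      ← Matrix.mul_assoc]
  have hpsd : (Sᴴ * ρ * S).PosSemidef := hρ.posSemidef.conjTranspose_mul_mul_same S
  have hne : Sᴴ * ρ * S ≠ 0 := by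
    intro hz
    apply h0
    have hSv : ∀ x : Fin d → ℂ, S *ᵥ x = 0 := by
      intro x
      by_contra hx
      have hpos := hρ.dotProduct_mulVec_pos hx
      have heq : star (S *ᵥ x) ⬝ᵥ ρ *ᵥ (S *ᵥ x) = star x ⬝ᵥ (Sᴴ * ρ * S) *ᵥ x := by
        rw [Matrix.star_mulVec, ← Matrix.mulVec_mulVec, ← Matrix.mulVec_mulVec,
          Matrix.dotProduct_mulVec (star x) Sᴴ]
      rw [heq, hz] at hpos
      simp at hpos
    have hS0 : S = 0 := by
      ext i k
      have := congrFun (hSv (Pi.single k 1)) i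
      simpa using this
    rw [← hS, hS0]
    simp
  rw [key]
  exact psd_trace_pos hpsd hne

/-- The trace bilinear form on matrices. -/
noncomputable def traceB (d : ℕ) : LinearMap.BilinForm ℂ (Matrix (Fin d) (Fin d) ℂ) :=
  LinearMap.mk₂ ℂ (fun X Y => (X * Y).trace)
    (fun X X' Y => by simp [Matrix.add_mul])
    (fun c X Y => by simp [Matrix.smul_mul])
    (fun X Y Y' => by simp [Matrix.mul_add])
    (fun c X Y => by simp [Matrix.mul_smul])

lemma traceB_apply {d : ℕ} (X Y : Matrix (Fin d) (Fin d) ℂ) :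
    traceB d X Y = (X * Y).trace := rfl

lemma traceB_refl (d : ℕ) : (traceB d).IsRefl := by
  intro X Y h
  rw [traceB_apply] at h ⊢
  rwa [Matrix.trace_mul_comm] at h

lemma traceB_nondegen (d : ℕ) : (traceB d).Nondegenerate := by
  refine (LinearMap.IsRefl.nondegenerate_iff_separatingLeft (traceB_refl d)).mpr ?_
  intro X h
  ext i j
  have := h (Matrix.single j i 1)
  rw [traceB_apply] at this
  simpa [Matrix.trace, Matrix.diag, Matrix.mul_apply, Matrix.single,
    Matrix.of_apply, ite_and, Finset.sum_ite_eq] using this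

/-- Key positivity lemma: if `tr(Cᴴ · F(C)) = 0` then all `tr(A_j C)` vanish. -/
lemma key_zero {d m : ℕ} (ρ : Matrix (Fin d) (Fin d) ℂ) (hρ : ρ.PosDef)
    (A : Fin m → Matrix (Fin d) (Fin d) ℂ) (hpsd : ∀ j, (A j).PosSemidef)
    (hA0 : ∀ j, A j ≠ 0) (C : Matrix (Fin d) (Fin d) ℂ)
    (h : (Cᴴ * fisherMap ρ A C).trace = 0) :
    ∀ j, (A j * C).trace = 0 := by
  have ht : ∀ j, 0 < (ρ * A j).trace := fun j => trace_mul_posdef_pos hρ (hpsd j) (hA0 j)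
  have hts : ∀ j, (ρ * A j).trace = (((ρ * A j).trace.re : ℝ) : ℂ) := by
    intro j
    have h' := (Complex.lt_def.mp (ht j)).2
    exact Complex.ext rfl (by simpa using h'.symm)
  have htr : ∀ j, 0 < ((ρ * A j).trace.re) := fun j => by
    simpa using (Complex.lt_def.mp (ht j)).1
  have hstar : ∀ j, (Cᴴ * A j).trace = star ((A j * C).trace) := by
    intro j
    rw [← Matrix.trace_conjTranspose, Matrix.conjTranspose_mul, (hpsd j).isHermitian.eq]
  rw [fisherMap_apply, Matrix.mul_sum] at h
  rw [Matrix.trace_sum] at h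
  simp only [Matrix.mul_smul, Matrix.trace_smul, smul_eq_mul] at h
  have hre : ∀ j ∈ Finset.univ, ((A j * C).trace / (ρ * A j).trace) * (Cᴴ * A j).trace
      = ((Complex.normSq ((A j * C).trace) / ((ρ * A j).trace.re) : ℝ) : ℂ) := by
    intro j _
    rw [hstar j, hts j, div_mul_eq_mul_div, Complex.star_def, Complex.mul_conj,
      ← Complex.ofReal_div]
    simp
  rw [Finset.sum_congr rfl hre] at h
  rw [← Complex.ofReal_sum] at h
  have hsum : ∑ j, Complex.normSq ((A j * C).trace) / ((ρ * A j).trace.re) = 0 := by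
    exact_mod_cast h
  intro j
  have hj := (Finset.sum_eq_zero_iff_of_nonneg
    (fun j _ => div_nonneg (Complex.normSq_nonneg _) (htr j).le)).mp hsum j (Finset.mem_univ j)
  have := (div_eq_zero_iff.mp hj).resolve_right (htr j).ne'
  exact Complex.normSq_eq_zero.mp this

set_option maxHeartbeats 1000000 in
set_option synthInstance.maxHeartbeats 400000 in
/-- The rank of `F(ρ,A)` equals `dim span {A_j}`, and the rank of `Ī ∘ F(ρ,A) ∘ Ī`
equals `dim span {A_j} − 1`. -/
theorem stmt_3 {d m : ℕ}
    (ρ : Matrix (Fin d) (Fin d) ℂ) (hρ : ρ.PosDef) (hρtr : ρ.trace = 1)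
    (A : Fin m → Matrix (Fin d) (Fin d) ℂ)
    (hA : IsPOVM A) (hA0 : ∀ j, A j ≠ 0) :
    Module.finrank ℂ (LinearMap.range (fisherMap ρ A)) =
      Module.finrank ℂ (Submodule.span ℂ (Set.range A)) ∧
    Module.finrank ℂ
        (LinearMap.range (tracelessProj d ∘ₗ fisherMap ρ A ∘ₗ tracelessProj d)) =
      Module.finrank ℂ (Submodule.span ℂ (Set.range A)) - 1 := by
  classical
  obtain ⟨hpsd, hAsum⟩ := hA
  rcases Nat.eq_zero_or_pos d with hd | hd
  · subst hd
    haveI hsub : Subsingleton (Matrix (Fin 0) (Fin 0) ℂ) :=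
      ⟨fun a b => by ext i j; exact i.elim0⟩
    have hz : ∀ (p : Submodule ℂ (Matrix (Fin 0) (Fin 0) ℂ)), Module.finrank ℂ p = 0 := by
      intro p
      haveI : Subsingleton p := ⟨fun a b => Subtype.ext (Subsingleton.elim _ _)⟩
      exact Module.finrank_zero_of_subsingleton
    rw [hz, hz, hz]
    exact ⟨rfl, rfl⟩
  · have hdC : (d : ℂ) ≠ 0 := Nat.cast_ne_zero.mpr hd.ne'
    set V := Submodule.span ℂ (Set.range A) with hV
    have hH : ∀ j, (A j).IsHermitian := fun j => (hpsd j).isHermitian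
    -- kernel of F
    have hkerF : LinearMap.ker (fisherMap ρ A) = (traceB d).orthogonal V := by
      ext C
      rw [LinearMap.mem_ker, LinearMap.BilinForm.mem_orthogonal_iff]
      constructor
      · intro hC
        have hz : ∀ j, (A j * C).trace = 0 :=
          key_zero ρ hρ A hpsd hA0 C (by rw [hC, mul_zero, Matrix.trace_zero])
        intro X hX
        have hle : V ≤ LinearMap.ker ((traceB d).flip C) := by
          rw [hV, Submodule.span_le]
          rintro X ⟨j, rfl⟩
          simpa [LinearMap.mem_ker, traceB_apply] using hz j
        exact hle hX
      · intro hC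
        have hz : ∀ j, (A j * C).trace = 0 := fun j =>
          hC (A j) (Submodule.subset_span ⟨j, rfl⟩)
        rw [fisherMap_apply]
        exact Finset.sum_eq_zero fun j _ => by rw [hz j]; simp
    have hNdim := LinearMap.finrank_range_add_finrank_ker (fisherMap ρ A)
    rw [hkerF, LinearMap.BilinForm.finrank_orthogonal (traceB_nondegen d)] at hNdim
    have hVle : Module.finrank ℂ V ≤ Module.finrank ℂ (Matrix (Fin d) (Fin d) ℂ) :=
      V.finrank_le
    -- traceless projection facts
    have htr0 : ∀ C : Matrix (Fin d) (Fin d) ℂ, (tracelessProj d C).trace = 0 := by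
      intro C
      rw [tracelessProj_apply, Matrix.trace_sub, Matrix.trace_smul, Matrix.trace_one]
      simp only [smul_eq_mul, Fintype.card_fin]
      rw [div_mul_cancel₀ _ hdC, sub_self]
    have hswap : ∀ X C : Matrix (Fin d) (Fin d) ℂ,
        (X * tracelessProj d C).trace = (tracelessProj d X * C).trace := by
      intro X C
      simp only [tracelessProj_apply, Matrix.mul_sub, Matrix.sub_mul, Matrix.trace_sub,
        Matrix.mul_smul, Matrix.smul_mul, Matrix.trace_smul, Matrix.mul_one, Matrix.one_mul,
        smul_eq_mul]
      ring
    have hker1 : LinearMap.ker (tracelessProj d)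
        = Submodule.span ℂ {(1 : Matrix (Fin d) (Fin d) ℂ)} := by
      ext C
      rw [LinearMap.mem_ker, tracelessProj_apply, sub_eq_zero, Submodule.mem_span_singleton]
      constructor
      · intro h
        exact ⟨C.trace / d, h.symm⟩
      · rintro ⟨a, rfl⟩
        rw [Matrix.trace_smul, Matrix.trace_one]
        simp only [smul_eq_mul, Fintype.card_fin]
        rw [mul_div_cancel_right₀ _ hdC]
    set G := tracelessProj d ∘ₗ fisherMap ρ A ∘ₗ tracelessProj d with hG
    have hGapp : ∀ C, G C = tracelessProj d (fisherMap ρ A (tracelessProj d C)) :=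
      fun C => rfl
    have hkerG : LinearMap.ker G = (traceB d).orthogonal (V.map (tracelessProj d)) := by
      ext C
      rw [LinearMap.mem_ker, LinearMap.BilinForm.mem_orthogonal_iff]
      constructor
      · intro hC
        set D := tracelessProj d C with hD
        have hFD : fisherMap ρ A D = ((fisherMap ρ A D).trace / d) • 1 := by
          have h' : tracelessProj d (fisherMap ρ A D) = 0 := hC
          rw [tracelessProj_apply, sub_eq_zero] at h'
          exact h'
        have hz : ∀ j, (A j * D).trace = 0 := by
          apply key_zero ρ hρ A hpsd hA0 D
          rw [hFD, Matrix.mul_smul, Matrix.trace_smul, Matrix.mul_one,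
            Matrix.trace_conjTranspose, hD, htr0 C]
          simp
        intro X hX
        obtain ⟨Y, hY, rfl⟩ := hX
        have hle : V ≤ LinearMap.ker ((traceB d).flip D) := by
          rw [hV, Submodule.span_le]
          rintro X ⟨j, rfl⟩
          simpa [LinearMap.mem_ker, traceB_apply] using hz j
        have : (Y * D).trace = 0 := hle hY
        show (tracelessProj d Y * C).trace = 0
        rw [← hswap Y C]
        exact this
      · intro hC
        have hz : ∀ j, (A j * tracelessProj d C).trace = 0 := by
          intro j
          have hmem : tracelessProj d (A j) ∈ V.map (tracelessProj d) :=
            ⟨A j, Submodule.subset_span ⟨j, rfl⟩, rfl⟩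
          have h' : (tracelessProj d (A j) * C).trace = 0 := hC _ hmem
          rw [hswap]
          exact h'
        rw [hGapp, fisherMap_apply]
        have : (∑ j, ((A j * tracelessProj d C).trace / (ρ * A j).trace) • A j)
            = (0 : Matrix (Fin d) (Fin d) ℂ) :=
          Finset.sum_eq_zero fun j _ => by rw [hz j]; simp
        rw [this, map_zero]
    have hNdim2 := LinearMap.finrank_range_add_finrank_ker G
    rw [hkerG,
      LinearMap.BilinForm.finrank_orthogonal (traceB_nondegen d)] at hNdim2
    -- finrank of the image of V under the traceless projection
    have hrange : LinearMap.range ((tracelessProj d).comp V.subtype)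
        = V.map (tracelessProj d) := by
      rw [LinearMap.range_comp, Submodule.range_subtype]
    have hmapdim := LinearMap.finrank_range_add_finrank_ker ((tracelessProj d).comp V.subtype)
    rw [hrange] at hmapdim
    have hone_mem : (1 : Matrix (Fin d) (Fin d) ℂ) ∈ V := by
      rw [← hAsum]
      exact Submodule.sum_mem _ fun j _ => Submodule.subset_span ⟨j, rfl⟩
    have hKle : Submodule.span ℂ {(1 : Matrix (Fin d) (Fin d) ℂ)} ≤ V := by
      rw [Submodule.span_le, Set.singleton_subset_iff]
      exact hone_mem
    have hone_ne : (1 : Matrix (Fin d) (Fin d) ℂ) ≠ 0 := by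
      intro h
      have := congrFun (congrFun h ⟨0, hd⟩) ⟨0, hd⟩
      simp [Matrix.one_apply] at this
    have hk1 : Module.finrank ℂ (LinearMap.ker ((tracelessProj d).comp V.subtype)) = 1 := by
      rw [LinearMap.ker_comp, hker1,
        LinearEquiv.finrank_eq (Submodule.comapSubtypeEquivOfLe hKle)]
      exact finrank_span_singleton hone_ne
    rw [hk1] at hmapdim
    have hmaple : Module.finrank ℂ (V.map (tracelessProj d))
        ≤ Module.finrank ℂ (Matrix (Fin d) (Fin d) ℂ) := (V.map (tracelessProj d)).finrank_le
    constructor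
    · omega
    · omega
end

section
/- Let ρ be a state on ℂ^d and let A = (A_1, …, A_m) and B = (B_1, …, B_n) be PVMs on ℂ^d with all elements nonzero. If F(ρ,A) = F(ρ,B), then n = m and there is a permutation σ of {1, …, m} such that B_k = A_{σ(k)} for every k. -/
open Matrix
open scoped ComplexOrder

-- auxiliary: trace (ρ * P) ≠ 0 for ρ posdef, P psd nonzero
lemma diag_entry_as_dot {d : ℕ} (ρ C : Matrix (Fin d) (Fin d) ℂ) (i : Fin d) :
    (C * ρ * Cᴴ) i i = dotProduct (star (star (C i))) (ρ *ᵥ (star (C i))) := by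
  simp only [mul_apply, conjTranspose_apply, dotProduct, mulVec, star_star,
    Finset.mul_sum, Finset.sum_mul]
  rw [Finset.sum_comm]
  refine Finset.sum_congr rfl fun a _ => Finset.sum_congr rfl fun b _ => ?_
  simp [Pi.star_apply, RCLike.star_def]
  ring

lemma trace_rho_mul_ne_zero {d : ℕ} {ρ P : Matrix (Fin d) (Fin d) ℂ}
    (hρ : ρ.PosDef) (hP : P.PosSemidef) (hP0 : P ≠ 0) : (ρ * P).trace ≠ 0 := by
  obtain ⟨C, rfl⟩ : ∃ C : Matrix (Fin d) (Fin d) ℂ, P = Cᴴ * C := by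
    open scoped MatrixOrder in exact CStarAlgebra.nonneg_iff_eq_star_mul_self.mp hP.nonneg
  have hC : C ≠ 0 := by
    rintro rfl; simp at hP0
  have htr : (ρ * (Cᴴ * C)).trace = (C * ρ * Cᴴ).trace := by
    rw [← Matrix.mul_assoc, Matrix.trace_mul_cycle]
  rw [htr, Matrix.trace]
  have hpsd : (C * ρ * Cᴴ).PosSemidef := hρ.posSemidef.mul_mul_conjTranspose_same C
  obtain ⟨i, hi⟩ : ∃ i, C i ≠ 0 := by
    by_contra h
    push_neg at h
    exact hC (by ext a b; simpa using congrFun (h a) b)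
  have hpos : 0 < ∑ i, (C * ρ * Cᴴ).diag i := by
    refine Finset.sum_pos' (fun j _ => ?_) ⟨i, Finset.mem_univ i, ?_⟩
    · have := hpsd.dotProduct_mulVec_nonneg (Pi.single j 1)
      simpa [dotProduct, mulVec, Pi.single_apply, Finset.sum_ite_eq, diag] using this
    · have hx : star (C i) ≠ 0 := star_ne_zero.mpr hi
      have := hρ.dotProduct_mulVec_pos hx
      simpa [diag, diag_entry_as_dot ρ C i] using this
  exact ne_of_gt hpos

lemma trace_psd_ne_zero {d : ℕ} {P : Matrix (Fin d) (Fin d) ℂ}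
    (hP : P.PosSemidef) (hP0 : P ≠ 0) : P.trace ≠ 0 := by
  have h1 : (1 : Matrix (Fin d) (Fin d) ℂ).PosDef := by
    have := Matrix.PosDef.diagonal (fun _ : Fin d => (one_pos : (0:ℂ) < 1))
    simpa using this
  simpa using trace_rho_mul_ne_zero h1 hP hP0

/-- Two PVMs (with no zero elements) having the same Fisher superoperator at some
state coincide up to a permutation. -/
theorem stmt_5 {d m n : ℕ}
    (ρ : Matrix (Fin d) (Fin d) ℂ) (hρ : ρ.PosDef) (hρtr : ρ.trace = 1)
    (A : Fin m → Matrix (Fin d) (Fin d) ℂ) (B : Fin n → Matrix (Fin d) (Fin d) ℂ)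
    (hA : IsPVM A) (hA0 : ∀ j, A j ≠ 0)
    (hB : IsPVM B) (hB0 : ∀ k, B k ≠ 0)
    (hF : fisherMap ρ A = fisherMap ρ B) :
    n = m ∧ ∃ σ : Fin n ≃ Fin m, ∀ k, B k = A (σ k) := by
  obtain ⟨⟨hApsd, hAsum⟩, hAproj, hAorth⟩ := hA
  obtain ⟨⟨hBpsd, hBsum⟩, hBproj, hBorth⟩ := hB
  have hτA : ∀ j, (ρ * A j).trace ≠ 0 := fun j => trace_rho_mul_ne_zero hρ (hApsd j) (hA0 j)
  have hτB : ∀ k, (ρ * B k).trace ≠ 0 := fun k => trace_rho_mul_ne_zero hρ (hBpsd k) (hB0 k)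
  have htA : ∀ j, (A j).trace ≠ 0 := fun j => trace_psd_ne_zero (hApsd j) (hA0 j)
  have htB : ∀ k, (B k).trace ≠ 0 := fun k => trace_psd_ne_zero (hBpsd k) (hB0 k)
  -- evaluation of fisherMap ρ B on B k
  have evalB : ∀ k, fisherMap ρ B (B k) = ((B k).trace / (ρ * B k).trace) • B k := by
    intro k
    show ∑ j, ((B j * B k).trace / (ρ * B j).trace) • B j = _
    rw [Finset.sum_eq_single k]
    · rw [hBproj k]
    · intro j _ hjk; rw [hBorth j k hjk]; simp
    · intro h; exact absurd (Finset.mem_univ k) h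
  have evalA : ∀ j, fisherMap ρ A (A j) = ((A j).trace / (ρ * A j).trace) • A j := by
    intro j
    show ∑ i, ((A i * A j).trace / (ρ * A i).trace) • A i = _
    rw [Finset.sum_eq_single j]
    · rw [hAproj j]
    · intro i _ hij; rw [hAorth i j hij]; simp
    · intro h; exact absurd (Finset.mem_univ j) h
  -- the key equations
  set c : Fin n → Fin m → ℂ :=
    fun k j => ((A j * B k).trace / (ρ * A j).trace) * ((ρ * B k).trace / (B k).trace) with hc
  set e : Fin m → Fin n → ℂ :=
    fun j k => ((B k * A j).trace / (ρ * B k).trace) * ((ρ * A j).trace / (A j).trace) with he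
  have hBdec : ∀ k, B k = ∑ j, c k j • A j := by
    intro k
    have h1 : fisherMap ρ A (B k) = ((B k).trace / (ρ * B k).trace) • B k := by
      rw [hF]; exact evalB k
    have h2 : ∑ j, ((A j * B k).trace / (ρ * A j).trace) • A j
        = ((B k).trace / (ρ * B k).trace) • B k := h1
    have h3 := congrArg (fun M => ((ρ * B k).trace / (B k).trace) • M) h2
    simp only [Finset.smul_sum, smul_smul] at h3
    have h4 : ((ρ * B k).trace / (B k).trace) * ((B k).trace / (ρ * B k).trace) = 1 := by
      rw [div_mul_div_comm, mul_comm ((ρ * B k).trace) ((B k).trace)]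
      exact div_self (mul_ne_zero (htB k) (hτB k))
    rw [h4, one_smul] at h3
    rw [← h3]
    refine Finset.sum_congr rfl fun j _ => ?_
    rw [hc]; ring_nf
  have hAdec : ∀ j, A j = ∑ k, e j k • B k := by
    intro j
    have h1 : fisherMap ρ B (A j) = ((A j).trace / (ρ * A j).trace) • A j := by
      rw [← hF]; exact evalA j
    have h2 : ∑ k, ((B k * A j).trace / (ρ * B k).trace) • B k
        = ((A j).trace / (ρ * A j).trace) • A j := h1
    have h3 := congrArg (fun M => ((ρ * A j).trace / (A j).trace) • M) h2
    simp only [Finset.smul_sum, smul_smul] at h3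
    have h4 : ((ρ * A j).trace / (A j).trace) * ((A j).trace / (ρ * A j).trace) = 1 := by
      rw [div_mul_div_comm, mul_comm ((ρ * A j).trace) ((A j).trace)]
      exact div_self (mul_ne_zero (htA j) (hτA j))
    rw [h4, one_smul] at h3
    rw [← h3]
    refine Finset.sum_congr rfl fun k _ => ?_
    rw [he]; ring_nf
  -- linear independence of the A's (and B's)
  have indepA : ∀ (u v : Fin m → ℂ), (∑ j, u j • A j = ∑ j, v j • A j) → ∀ l, u l = v l := by
    intro u v h l
    have h2 := congrArg (fun M => (M * A l).trace) h
    simp only [Finset.sum_mul, smul_mul_assoc, trace_sum, trace_smul, smul_eq_mul] at h2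
    rw [Finset.sum_eq_single l, Finset.sum_eq_single l] at h2
    · rw [hAproj l] at h2
      exact mul_right_cancel₀ (htA l) h2
    · intro j _ hjl; rw [hAorth j l hjl]; simp
    · intro h; exact absurd (Finset.mem_univ l) h
    · intro j _ hjl; rw [hAorth j l hjl]; simp
    · intro h; exact absurd (Finset.mem_univ l) h
  have indepB : ∀ (u v : Fin n → ℂ), (∑ k, u k • B k = ∑ k, v k • B k) → ∀ l, u l = v l := by
    intro u v h l
    have h2 := congrArg (fun M => (M * B l).trace) h
    simp only [Finset.sum_mul, smul_mul_assoc, trace_sum, trace_smul, smul_eq_mul] at h2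
    rw [Finset.sum_eq_single l, Finset.sum_eq_single l] at h2
    · rw [hBproj l] at h2
      exact mul_right_cancel₀ (htB l) h2
    · intro j _ hjl; rw [hBorth j l hjl]; simp
    · intro h; exact absurd (Finset.mem_univ l) h
    · intro j _ hjl; rw [hBorth j l hjl]; simp
    · intro h; exact absurd (Finset.mem_univ l) h
  -- c k j ∈ {0,1}
  have hc01 : ∀ k j, c k j = 0 ∨ c k j = 1 := by
    intro k j
    have hsq : B k * B k = B k := hBproj k
    rw [hBdec k] at hsq
    have hexp : (∑ i, c k i • A i) * (∑ i, c k i • A i) = ∑ i, (c k i * c k i) • A i := by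
      rw [Finset.sum_mul]
      refine Finset.sum_congr rfl fun i _ => ?_
      rw [Finset.mul_sum, Finset.sum_eq_single i]
      · rw [smul_mul_assoc, mul_smul_comm, hAproj i, smul_smul]
      · intro l _ hli
        rw [smul_mul_assoc, mul_smul_comm, hAorth i l (Ne.symm hli)]; simp
      · intro h; exact absurd (Finset.mem_univ i) h
    rw [hexp] at hsq
    have := indepA _ _ hsq j
    have h0 : c k j * (c k j - 1) = 0 := by linear_combination this
    rcases mul_eq_zero.mp h0 with h | h
    · exact Or.inl h
    · exact Or.inr (sub_eq_zero.mp h)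
  have he01 : ∀ j k, e j k = 0 ∨ e j k = 1 := by
    intro j k
    have hsq : A j * A j = A j := hAproj j
    rw [hAdec j] at hsq
    have hexp : (∑ i, e j i • B i) * (∑ i, e j i • B i) = ∑ i, (e j i * e j i) • B i := by
      rw [Finset.sum_mul]
      refine Finset.sum_congr rfl fun i _ => ?_
      rw [Finset.mul_sum, Finset.sum_eq_single i]
      · rw [smul_mul_assoc, mul_smul_comm, hBproj i, smul_smul]
      · intro l _ hli
        rw [smul_mul_assoc, mul_smul_comm, hBorth i l (Ne.symm hli)]; simp
      · intro h; exact absurd (Finset.mem_univ i) h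
    rw [hexp] at hsq
    have := indepB _ _ hsq k
    have h0 : e j k * (e j k - 1) = 0 := by linear_combination this
    rcases mul_eq_zero.mp h0 with h | h
    · exact Or.inl h
    · exact Or.inr (sub_eq_zero.mp h)
  -- products
  have hAB : ∀ k j, A j * B k = c k j • A j := by
    intro k j
    rw [hBdec k, Finset.mul_sum, Finset.sum_eq_single j]
    · rw [mul_smul_comm, hAproj j]
    · intro l _ hlj; rw [mul_smul_comm, hAorth j l (Ne.symm hlj)]; simp
    · intro h; exact absurd (Finset.mem_univ j) h
  have hAB' : ∀ k j, A j * B k = e j k • B k := by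
    intro k j
    rw [hAdec j, Finset.sum_mul, Finset.sum_eq_single k]
    · rw [smul_mul_assoc, hBproj k]
    · intro l _ hlk; rw [smul_mul_assoc, hBorth l k hlk]; simp
    · intro h; exact absurd (Finset.mem_univ k) h
  have hBA : ∀ k j, B k * A j = c k j • A j := by
    intro k j
    rw [hBdec k, Finset.sum_mul, Finset.sum_eq_single j]
    · rw [smul_mul_assoc, hAproj j]
    · intro l _ hlj; rw [smul_mul_assoc, hAorth l j hlj]; simp
    · intro h; exact absurd (Finset.mem_univ j) h
  have hBA' : ∀ k j, B k * A j = e j k • B k := by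
    intro k j
    rw [hAdec j, Finset.mul_sum, Finset.sum_eq_single k]
    · rw [mul_smul_comm, hBproj k]
    · intro l _ hlk; rw [mul_smul_comm, hBorth k l (Ne.symm hlk)]; simp
    · intro h; exact absurd (Finset.mem_univ k) h
  -- c k j = 1 → A j = B k
  have key : ∀ k j, c k j = 1 → A j = B k := by
    intro k j hckj
    have h1 : A j = e j k • B k := by
      rw [← hAB' k j, hAB k j, hckj, one_smul]
    rcases he01 j k with h | h
    · rw [h, zero_smul] at h1; exact absurd h1 (hA0 j)
    · rw [h, one_smul] at h1; exact h1
  have key' : ∀ k j, e j k = 1 → A j = B k := by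
    intro k j hejk
    have h1 : B k = c k j • A j := by
      rw [← hBA k j, hBA' k j, hejk, one_smul]
    rcases hc01 k j with h | h
    · rw [h, zero_smul] at h1; exact absurd h1 (hB0 k)
    · exact key k j h
  -- each B k matches some A j, and vice versa
  have hex : ∀ k, ∃ j, c k j = 1 := by
    intro k
    by_contra h
    push_neg at h
    have hz : ∀ j, c k j = 0 := fun j => (hc01 k j).resolve_right (h j)
    have : B k = 0 := by
      rw [hBdec k]
      refine Finset.sum_eq_zero fun j _ => by rw [hz j, zero_smul]
    exact hB0 k this
  have hex' : ∀ j, ∃ k, e j k = 1 := by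
    intro j
    by_contra h
    push_neg at h
    have hz : ∀ k, e j k = 0 := fun k => (he01 j k).resolve_right (h k)
    have : A j = 0 := by
      rw [hAdec j]
      refine Finset.sum_eq_zero fun k _ => by rw [hz k, zero_smul]
    exact hA0 j this
  -- the families A and B are injective
  have hAinj : ∀ j j', A j = A j' → j = j' := by
    intro j j' hjj'
    by_contra hne
    have : A j * A j' = 0 := hAorth j j' hne
    rw [hjj', hAproj j'] at this
    exact hA0 j' this
  have hBinj : ∀ k k', B k = B k' → k = k' := by
    intro k k' hkk'
    by_contra hne
    have : B k * B k' = 0 := hBorth k k' hne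
    rw [hkk', hBproj k'] at this
    exact hB0 k' this
  choose f hf using hex
  choose g hg using hex'
  have hfB : ∀ k, A (f k) = B k := fun k => key k (f k) (hf k)
  have hgA : ∀ j, A j = B (g j) := fun j => key' (g j) j (hg j)
  have hgf : ∀ k, g (f k) = k := by
    intro k
    apply hBinj
    rw [← hgA (f k), hfB k]
  have hfg : ∀ j, f (g j) = j := by
    intro j
    apply hAinj
    rw [hfB (g j), ← hgA j]
  have hnm : n = m := by
    have := Fintype.card_congr (⟨f, g, hgf, hfg⟩ : Fin n ≃ Fin m)
    simpa using this
  exact ⟨hnm, ⟨f, g, hgf, hfg⟩, fun k => (hfB k).symm⟩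
end

section
/- Let ρ be a state on ℂ^d. Define the linear maps on d×d complex matrices: S(C) = (ρC + Cρ)/2, L(C) = ρC, R(C) = Cρ (all invertible since ρ is positive definite), and P(C) = tr(ρC)·ρ. Then (S − P) ∘ (Ī ∘ S⁻¹ ∘ Ī) = Ī = (Ī ∘ S⁻¹ ∘ Ī) ∘ (S − P), and the same identities hold with S replaced by L and with S replaced by R (i.e., the Moore–Penrose inverse of Ī ∘ S⁻¹ ∘ Ī is S − P, and likewise for L and R). -/
open Matrix
open scoped ComplexOrder

/-- The superoperator `S(C) = (ρC + Cρ)/2`. -/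
noncomputable def smap {d : ℕ} (ρ : Matrix (Fin d) (Fin d) ℂ) :
    Matrix (Fin d) (Fin d) ℂ →ₗ[ℂ] Matrix (Fin d) (Fin d) ℂ :=
  (2⁻¹ : ℂ) • (LinearMap.mulLeft ℂ ρ + LinearMap.mulRight ℂ ρ)

/-- The superoperator `L(C) = ρC`. -/
noncomputable def lmap {d : ℕ} (ρ : Matrix (Fin d) (Fin d) ℂ) :
    Matrix (Fin d) (Fin d) ℂ →ₗ[ℂ] Matrix (Fin d) (Fin d) ℂ :=
  LinearMap.mulLeft ℂ ρ

/-- The superoperator `R(C) = Cρ`. -/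
noncomputable def rmap {d : ℕ} (ρ : Matrix (Fin d) (Fin d) ℂ) :
    Matrix (Fin d) (Fin d) ℂ →ₗ[ℂ] Matrix (Fin d) (Fin d) ℂ :=
  LinearMap.mulRight ℂ ρ

/-- The superoperator `P(C) = tr(ρC)·ρ`. -/
noncomputable def pmap {d : ℕ} (ρ : Matrix (Fin d) (Fin d) ℂ) :
    Matrix (Fin d) (Fin d) ℂ →ₗ[ℂ] Matrix (Fin d) (Fin d) ℂ where
  toFun C := (ρ * C).trace • ρ
  map_add' X Y := by simp [Matrix.mul_add, add_smul]
  map_smul' c X := by simp [Matrix.mul_smul, smul_smul]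

lemma trace_conjT_mul_self {d : ℕ} (A : Matrix (Fin d) (Fin d) ℂ) :
    (Aᴴ * A).trace = ((∑ i, ∑ j, Complex.normSq (A i j) : ℝ) : ℂ) := by
  simp only [Matrix.trace, Matrix.diag, Matrix.mul_apply, Matrix.conjTranspose_apply]
  push_cast
  rw [Finset.sum_comm]
  congr 1; ext i; congr 1; ext j
  rw [mul_comm]; exact Complex.mul_conj _

lemma pmap_apply {d : ℕ} (ρ C : Matrix (Fin d) (Fin d) ℂ) :
    pmap ρ C = (ρ * C).trace • ρ := rfl

lemma trace_tracelessProj {d : ℕ} (hd : (d : ℂ) ≠ 0) (C : Matrix (Fin d) (Fin d) ℂ) :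
    (tracelessProj d C).trace = 0 := by
  rw [tracelessProj_apply, Matrix.trace_sub, Matrix.trace_smul, Matrix.trace_one, Fintype.card_fin,
    smul_eq_mul]
  rw [div_mul_cancel₀ _ hd, sub_self]

/-- Generic Moore–Penrose identity given the two key properties of `X`. -/
lemma mp_aux {d : ℕ} (hd : (d : ℂ) ≠ 0)
    (ρ : Matrix (Fin d) (Fin d) ℂ) (hρtr : ρ.trace = 1)
    (X T : Matrix (Fin d) (Fin d) ℂ →ₗ[ℂ] Matrix (Fin d) (Fin d) ℂ)
    (hX1 : X 1 = ρ)
    (hXtr : ∀ C, (X C).trace = (ρ * C).trace)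
    (hXT : X ∘ₗ T = LinearMap.id) (hTX : T ∘ₗ X = LinearMap.id) :
    (X - pmap ρ) ∘ₗ (tracelessProj d ∘ₗ T ∘ₗ tracelessProj d) = tracelessProj d ∧
    (tracelessProj d ∘ₗ T ∘ₗ tracelessProj d) ∘ₗ (X - pmap ρ) = tracelessProj d := by
  have hTρ : T ρ = 1 := by
    have := congrArg (fun f => f (1 : Matrix (Fin d) (Fin d) ℂ)) hTX
    simpa [hX1] using this
  have hXT' : ∀ C, X (T C) = C := fun C =>
    congrArg (fun f => f C) hXT
  constructor
  · refine LinearMap.ext fun C => ?_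
    simp only [LinearMap.comp_apply, LinearMap.sub_apply, pmap_apply]
    set C₀ := tracelessProj d C with hC0
    have htrC0 : C₀.trace = 0 := trace_tracelessProj hd C
    set t := (T C₀).trace with ht
    rw [tracelessProj_apply (T C₀)]
    have h1 : X (T C₀ - (t / d) • 1) = C₀ - (t / d) • ρ := by
      rw [map_sub, LinearMap.map_smul, hX1, hXT']
    have h2 : (ρ * (T C₀ - (t / d) • 1)).trace = -(t / d) := by
      have h3 : (ρ * T C₀).trace = (0 : ℂ) := by rw [← hXtr, hXT', htrC0]
      rw [Matrix.mul_sub, Matrix.trace_sub, Matrix.mul_smul, Matrix.mul_one, Matrix.trace_smul,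
        hρtr, h3, smul_eq_mul, mul_one, zero_sub]
    rw [h1, h2]
    simp only [neg_smul, sub_neg_eq_add, sub_add_cancel]
  · refine LinearMap.ext fun C => ?_
    simp only [LinearMap.comp_apply, LinearMap.sub_apply, pmap_apply]
    set s := (ρ * C).trace with hs
    have htrA : (X C - s • ρ).trace = 0 := by
      rw [Matrix.trace_sub, Matrix.trace_smul, hXtr, hρtr, smul_eq_mul, mul_one, sub_self]
    rw [tracelessProj_apply (X C - s • ρ), htrA]
    simp only [zero_div, zero_smul, sub_zero]
    rw [map_sub, LinearMap.map_smul, hTρ]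
    have hTXC : T (X C) = C := congrArg (fun f => f C) hTX
    rw [hTXC, tracelessProj_apply, tracelessProj_apply]
    rw [Matrix.trace_sub, Matrix.trace_smul, Matrix.trace_one, Fintype.card_fin, smul_eq_mul,
      sub_div, mul_div_assoc, div_self hd, mul_one, sub_smul]
    abel

/-- `S`, `L`, `R` are invertible, and the Moore–Penrose inverse of `Ī ∘ X⁻¹ ∘ Ī`
is `X − P` for each `X ∈ {S, L, R}`. -/
theorem stmt_6 {d : ℕ}
    (ρ : Matrix (Fin d) (Fin d) ℂ) (hρ : ρ.PosDef) (hρtr : ρ.trace = 1) :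
    Function.Bijective (smap ρ) ∧ Function.Bijective (lmap ρ) ∧
      Function.Bijective (rmap ρ) ∧
    (∀ T : Matrix (Fin d) (Fin d) ℂ →ₗ[ℂ] Matrix (Fin d) (Fin d) ℂ,
      smap ρ ∘ₗ T = LinearMap.id ∧ T ∘ₗ smap ρ = LinearMap.id →
      (smap ρ - pmap ρ) ∘ₗ (tracelessProj d ∘ₗ T ∘ₗ tracelessProj d) = tracelessProj d ∧
      (tracelessProj d ∘ₗ T ∘ₗ tracelessProj d) ∘ₗ (smap ρ - pmap ρ) = tracelessProj d) ∧
    (∀ T : Matrix (Fin d) (Fin d) ℂ →ₗ[ℂ] Matrix (Fin d) (Fin d) ℂ,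
      lmap ρ ∘ₗ T = LinearMap.id ∧ T ∘ₗ lmap ρ = LinearMap.id →
      (lmap ρ - pmap ρ) ∘ₗ (tracelessProj d ∘ₗ T ∘ₗ tracelessProj d) = tracelessProj d ∧
      (tracelessProj d ∘ₗ T ∘ₗ tracelessProj d) ∘ₗ (lmap ρ - pmap ρ) = tracelessProj d) ∧
    (∀ T : Matrix (Fin d) (Fin d) ℂ →ₗ[ℂ] Matrix (Fin d) (Fin d) ℂ,
      rmap ρ ∘ₗ T = LinearMap.id ∧ T ∘ₗ rmap ρ = LinearMap.id →
      (rmap ρ - pmap ρ) ∘ₗ (tracelessProj d ∘ₗ T ∘ₗ tracelessProj d) = tracelessProj d ∧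
      (tracelessProj d ∘ₗ T ∘ₗ tracelessProj d) ∘ₗ (rmap ρ - pmap ρ) = tracelessProj d) := by
  have hd : (d : ℂ) ≠ 0 := by
    rintro h
    have hd0 : d = 0 := by exact_mod_cast h
    subst hd0
    simp [Matrix.trace, Matrix.diag] at hρtr
  have hρu : IsUnit ρ := hρ.isUnit
  -- square root
  open scoped MatrixOrder in set σ := CFC.sqrt ρ with hσdef
  open scoped MatrixOrder in have hσσ : σ * σ = ρ := CFC.sqrt_mul_sqrt_self ρ hρ.posSemidef.nonneg
  open scoped MatrixOrder in have hσH : σᴴ = σ := (CFC.sqrt_nonneg ρ).posSemidef.isHermitian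
  have hσu : IsUnit σ := by
    rw [Matrix.isUnit_iff_isUnit_det] at hρu ⊢
    rw [← hσσ, Matrix.det_mul] at hρu
    exact isUnit_of_mul_isUnit_left hρu
  -- injectivity of smap
  have hsinj : Function.Injective (smap ρ) := by
    rw [injective_iff_map_eq_zero]
    intro C hC
    have hsum : ρ * C + C * ρ = 0 := by
      have : ((2 : ℂ)⁻¹) • (ρ * C + C * ρ) = 0 := by
        simpa [smap, LinearMap.mulLeft_apply, LinearMap.mulRight_apply] using hC
      have h2 : ((2 : ℂ)⁻¹) ≠ 0 := by norm_num
      exact (smul_eq_zero.mp this).resolve_left h2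
    have h0 : (Cᴴ * (ρ * C + C * ρ)).trace = 0 := by rw [hsum, Matrix.mul_zero, Matrix.trace_zero]
    have e1 : ((σ * C)ᴴ * (σ * C)).trace = (Cᴴ * (ρ * C)).trace := by
      rw [Matrix.conjTranspose_mul, hσH, ← hσσ]
      simp only [Matrix.mul_assoc]
    have e2 : ((C * σ)ᴴ * (C * σ)).trace = (Cᴴ * (C * ρ)).trace := by
      rw [Matrix.conjTranspose_mul, hσH, Matrix.trace_mul_comm, Matrix.trace_mul_comm Cᴴ, ← hσσ]
      simp only [Matrix.mul_assoc]
    have hexp : (Cᴴ * (ρ * C + C * ρ)).trace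
        = ((σ * C)ᴴ * (σ * C)).trace + ((C * σ)ᴴ * (C * σ)).trace := by
      rw [Matrix.mul_add, Matrix.trace_add, e1, e2]
    rw [hexp, trace_conjT_mul_self, trace_conjT_mul_self, ← Complex.ofReal_add] at h0
    have hre : (∑ i, ∑ j, Complex.normSq ((σ * C) i j))
        + (∑ i, ∑ j, Complex.normSq ((C * σ) i j)) = 0 := by exact_mod_cast h0
    have hA0 : (∑ i, ∑ j, Complex.normSq ((σ * C) i j)) = 0 := by
      have h1 : 0 ≤ (∑ i, ∑ j, Complex.normSq ((σ * C) i j)) :=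
        Finset.sum_nonneg fun i _ => Finset.sum_nonneg fun j _ => Complex.normSq_nonneg _
      have h2 : 0 ≤ (∑ i, ∑ j, Complex.normSq ((C * σ) i j)) :=
        Finset.sum_nonneg fun i _ => Finset.sum_nonneg fun j _ => Complex.normSq_nonneg _
      linarith
    have hσC : σ * C = 0 := by
      ext i j
      have := (Finset.sum_eq_zero_iff_of_nonneg
        (fun i _ => Finset.sum_nonneg fun j _ => Complex.normSq_nonneg _)).mp hA0 i (by simp)
      have := (Finset.sum_eq_zero_iff_of_nonneg
        (fun j _ => Complex.normSq_nonneg _)).mp this j (by simp)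
      simpa [Complex.normSq_eq_zero] using this
    have := hσu.mul_left_cancel (a := σ) (by rw [hσC, Matrix.mul_zero] : σ * C = σ * 0)
    simpa using this
  have hlinj : Function.Injective (lmap ρ) := by
    rw [injective_iff_map_eq_zero]
    intro C hC
    have : ρ * C = ρ * 0 := by simpa [lmap, Matrix.mul_zero] using hC
    exact hρu.mul_left_cancel this
  have hrinj : Function.Injective (rmap ρ) := by
    rw [injective_iff_map_eq_zero]
    intro C hC
    have : C * ρ = 0 * ρ := by simpa [rmap, Matrix.zero_mul] using hC
    exact hρu.mul_right_cancel this
  have hstr : ∀ C, ((smap ρ) C).trace = (ρ * C).trace := by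
    intro C
    simp only [smap, LinearMap.smul_apply, LinearMap.add_apply, LinearMap.mulLeft_apply,
      LinearMap.mulRight_apply, Matrix.trace_smul, Matrix.trace_add]
    rw [Matrix.trace_mul_comm C ρ, smul_eq_mul]
    ring
  have hs1 : (smap ρ) 1 = ρ := by
    simp only [smap, LinearMap.smul_apply, LinearMap.add_apply, LinearMap.mulLeft_apply,
      LinearMap.mulRight_apply, Matrix.mul_one, Matrix.one_mul]
    rw [smul_add]
    module
  have hl1 : (lmap ρ) 1 = ρ := by simp [lmap]
  have hr1 : (rmap ρ) 1 = ρ := by simp [rmap]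
  have hltr : ∀ C, ((lmap ρ) C).trace = (ρ * C).trace := fun C => rfl
  have hrtr : ∀ C, ((rmap ρ) C).trace = (ρ * C).trace := fun C => by
    simp only [rmap, LinearMap.mulRight_apply]
    exact Matrix.trace_mul_comm C ρ
  refine ⟨⟨hsinj, (LinearMap.injective_iff_surjective).mp hsinj⟩,
    ⟨hlinj, (LinearMap.injective_iff_surjective).mp hlinj⟩,
    ⟨hrinj, (LinearMap.injective_iff_surjective).mp hrinj⟩,
    fun T ⟨h1, h2⟩ => mp_aux hd ρ hρtr (smap ρ) T hs1 hstr h1 h2,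
    fun T ⟨h1, h2⟩ => mp_aux hd ρ hρtr (lmap ρ) T hl1 hltr h1 h2,
    fun T ⟨h1, h2⟩ => mp_aux hd ρ hρtr (rmap ρ) T hr1 hrtr h1 h2⟩
end

section
/- Let ρ be a state on ℂ^d and A = (A_1, …, A_m) a POVM on ℂ^d. Then Σ_{j : A_j ≠ 0} tr(ρ A_j²)/tr(ρ A_j) ≤ min(m, d). If m ≤ d, the bound m is attained if and only if A is a PVM with all m elements nonzero; if m ≥ d, the bound d is attained if and only if every nonzero element A_j has rank 1. -/
open Matrix
open scoped ComplexOrder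

set_option linter.unusedSectionVars false

section Helpers

variable {n : Type*} [Fintype n] [DecidableEq n] {M N ρ : Matrix n n ℂ}

open scoped MatrixOrder

lemma diag_nonneg' (hM : M.PosSemidef) (i : n) : 0 ≤ M i i := by
  exact hM.diag_nonneg

lemma trace_nonneg' (hM : M.PosSemidef) : 0 ≤ M.trace := by
  rw [Matrix.trace]
  exact Finset.sum_nonneg fun i _ => diag_nonneg' hM i

lemma trace_eq_zero_iff' (hM : M.PosSemidef) : M.trace = 0 ↔ M = 0 := by
  constructor
  · intro h
    obtain ⟨B, rfl⟩ : ∃ B : Matrix n n ℂ, M = Bᴴ * B :=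
      ⟨CFC.sqrt M, by rw [(CFC.sqrt_nonneg M).posSemidef.1.eq, CFC.sqrt_mul_sqrt_self M hM.nonneg]⟩
    have htr : ∑ i, ∑ k, Complex.normSq (B k i) = 0 := by
      have := congrArg Complex.re h
      simpa [Matrix.trace, Matrix.diag, Matrix.mul_apply, Complex.normSq,
        Complex.mul_re, Complex.mul_im, mul_comm] using this
    have hB : B = 0 := by
      ext k i
      have h1 : ∀ i ∈ Finset.univ, (0:ℝ) ≤ ∑ k, Complex.normSq (B k i) :=
        fun i _ => Finset.sum_nonneg fun k _ => Complex.normSq_nonneg _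
      have := (Finset.sum_eq_zero_iff_of_nonneg h1).mp htr i (Finset.mem_univ i)
      have := (Finset.sum_eq_zero_iff_of_nonneg
        (fun k _ => Complex.normSq_nonneg (B k i))).mp this k (Finset.mem_univ k)
      simpa [Complex.normSq_eq_zero] using this
    simp [hB]
  · rintro rfl; simp

lemma trace_mul_nonneg' (hρ : ρ.PosSemidef) (hM : M.PosSemidef) : 0 ≤ (ρ * M).trace := by
  set S := CFC.sqrt ρ with hS
  have hSh : Sᴴ = S := (CFC.sqrt_nonneg ρ).posSemidef.1
  have h1 : ρ * M = S * (S * M) := by rw [← mul_assoc, CFC.sqrt_mul_sqrt_self ρ hρ.nonneg]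
  have h2 : (ρ * M).trace = (S * M * S).trace := by
    rw [h1, Matrix.trace_mul_comm, mul_assoc]
  rw [h2]
  have := hM.conjTranspose_mul_mul_same S
  rw [hSh] at this
  exact trace_nonneg' this

lemma trace_mul_eq_zero_iff' (hρ : ρ.PosDef) (hM : M.PosSemidef) :
    (ρ * M).trace = 0 ↔ M = 0 := by
  constructor
  · intro h
    set S := CFC.sqrt ρ with hS
    have hSh : Sᴴ = S := (CFC.sqrt_nonneg ρ).posSemidef.1
    have h1 : ρ * M = S * (S * M) := by rw [← mul_assoc, CFC.sqrt_mul_sqrt_self ρ hρ.posSemidef.nonneg]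
    have h2 : (S * M * S).trace = 0 := by
      rw [Matrix.trace_mul_comm, ← mul_assoc]
      rw [show S * (S * M) = S * S * M from (mul_assoc S S M).symm] at h1
      rw [← h1, h]
    have hpsd := hM.conjTranspose_mul_mul_same S
    rw [hSh] at hpsd
    have h3 : S * M * S = 0 := (trace_eq_zero_iff' hpsd).mp h2
    have hdet : IsUnit S.det := by
      have hd : ρ.det = S.det * S.det := by
        conv_lhs => rw [← CFC.sqrt_mul_sqrt_self ρ hρ.posSemidef.nonneg]
        exact Matrix.det_mul _ _
      have : ρ.det ≠ 0 := ne_of_gt hρ.det_pos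
      rw [hd] at this
      exact (IsUnit.mul_iff.mp (isUnit_iff_ne_zero.mpr this)).1
    have hinv : S⁻¹ * (S * M * S) * S⁻¹ = M := by
      calc S⁻¹ * (S * M * S) * S⁻¹ = (S⁻¹ * S) * M * (S * S⁻¹) := by
              noncomm_ring
        _ = M := by rw [Matrix.nonsing_inv_mul S hdet, Matrix.mul_nonsing_inv S hdet,
              Matrix.one_mul, Matrix.mul_one]
    rw [← hinv, h3]; simp
  · rintro rfl; simp

section spectral
variable (hM : M.IsHermitian)

lemma trace_eq_sum_eig : M.trace = ∑ i, (hM.eigenvalues i : ℂ) := by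
  conv_lhs => rw [hM.spectral_theorem, Unitary.conjStarAlgAut_apply]
  rw [Matrix.trace_mul_cycle]
  rw [show (star (hM.eigenvectorUnitary : Matrix n n ℂ)) * (hM.eigenvectorUnitary : Matrix n n ℂ)
      = 1 from Unitary.coe_star_mul_self _]
  rw [Matrix.one_mul, Matrix.trace_diagonal]
  rfl

lemma conj_unitary_eq_iff {X Y : Matrix n n ℂ} :
    (hM.eigenvectorUnitary : Matrix n n ℂ) * X * (star (hM.eigenvectorUnitary : Matrix n n ℂ))
      = (hM.eigenvectorUnitary : Matrix n n ℂ) * Y * (star (hM.eigenvectorUnitary : Matrix n n ℂ))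
    ↔ X = Y := by
  set U := (hM.eigenvectorUnitary : Matrix n n ℂ)
  have h1 : star U * U = 1 := Unitary.coe_star_mul_self _
  have h2 : U * star U = 1 := Unitary.coe_mul_star_self _
  constructor
  · intro h
    have key : ∀ Z : Matrix n n ℂ, star U * (U * Z * star U) * U = Z := by
      intro Z
      calc star U * (U * Z * star U) * U = (star U * U) * Z * (star U * U) := by noncomm_ring
      _ = Z := by rw [h1, Matrix.one_mul, Matrix.mul_one]
    calc X = star U * (U * X * star U) * U := (key X).symm
    _ = star U * (U * Y * star U) * U := by rw [h]
    _ = Y := key Y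
  · rintro rfl; rfl

lemma mul_self_eq_smul_iff (c : ℝ) :
    M * M = (c : ℂ) • M ↔ ∀ i, hM.eigenvalues i ^ 2 = c * hM.eigenvalues i := by
  set U := (hM.eigenvectorUnitary : Matrix n n ℂ) with hU
  set D := Matrix.diagonal ((↑) ∘ hM.eigenvalues : n → ℂ) with hD
  have h1 : star U * U = 1 := Unitary.coe_star_mul_self _
  have hspec : M = U * D * star U := hM.spectral_theorem
  have hMM : M * M = U * (D * D) * star U := by
    rw [hspec]
    calc (U * D * star U) * (U * D * star U) = U * (D * ((star U * U) * D)) * star U := by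
          noncomm_ring
    _ = U * (D * D) * star U := by rw [h1, Matrix.one_mul, ← Matrix.mul_assoc]
  have hsmul : (c:ℂ) • M = U * ((c:ℂ) • D) * star U := by
    rw [hspec, Matrix.mul_smul, Matrix.smul_mul]
  rw [hMM, hsmul, conj_unitary_eq_iff hM]
  have hDD : D * D = Matrix.diagonal (fun i => ((hM.eigenvalues i : ℂ))^2) := by
    rw [hD, Matrix.diagonal_mul_diagonal]
    congr 1; ext i; simp [pow_two]
  have hcD : (c:ℂ) • D = Matrix.diagonal (fun i => (c:ℂ) * (hM.eigenvalues i : ℂ)) := by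
    rw [hD]
    ext i j
    by_cases hij : i = j <;> simp [Matrix.diagonal, hij]
  rw [hDD, hcD]
  constructor
  · intro h i
    have h2 := (Matrix.diagonal_eq_diagonal_iff).mp h i
    exact_mod_cast h2
  · intro h
    rw [Matrix.diagonal_eq_diagonal_iff]
    intro i
    exact_mod_cast h i

end spectral

lemma smul_one_sub_posSemidef (hM : M.IsHermitian) {c : ℝ}
    (h : ∀ i, hM.eigenvalues i ≤ c) : ((c:ℂ) • (1 : Matrix n n ℂ) - M).PosSemidef := by
  set U := (hM.eigenvectorUnitary : Matrix n n ℂ) with hU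
  set D := Matrix.diagonal ((↑) ∘ hM.eigenvalues : n → ℂ) with hD
  have h1 : star U * U = 1 := Unitary.coe_star_mul_self _
  have h2 : U * star U = 1 := Unitary.coe_mul_star_self _
  have hspec : M = U * D * star U := hM.spectral_theorem
  have key : (c:ℂ) • (1 : Matrix n n ℂ) - M
      = U * (Matrix.diagonal (fun i => ((c - hM.eigenvalues i : ℝ) : ℂ))) * star U := by
    have hδ : Matrix.diagonal (fun i => ((c - hM.eigenvalues i : ℝ) : ℂ))
        = (c:ℂ) • (1 : Matrix n n ℂ) - D := by
      ext i j
      by_cases hij : i = j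
      · simp only [Matrix.diagonal, hij, Matrix.sub_apply, Matrix.smul_apply,
          Matrix.one_apply_eq, Matrix.of_apply, if_pos rfl, hD, smul_eq_mul, mul_one,
          Function.comp_apply]
        push_cast
        ring
      · simp [Matrix.diagonal, hij, Matrix.one_apply, hD]
    rw [hδ, Matrix.mul_sub, Matrix.sub_mul, ← hspec]
    congr 1
    rw [Matrix.mul_smul, Matrix.smul_mul, Matrix.mul_one, h2]
  rw [key]
  have hdiag : (Matrix.diagonal (fun i => ((c - hM.eigenvalues i : ℝ) : ℂ))).PosSemidef := by
    rw [Matrix.posSemidef_diagonal_iff]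
    intro i
    rw [Complex.zero_le_real]
    linarith [h i]
  rw [Matrix.star_eq_conjTranspose]
  exact hdiag.mul_mul_conjTranspose_same U

lemma eq_zero_iff_eig_zero (hM : M.IsHermitian) : M = 0 ↔ ∀ i, hM.eigenvalues i = 0 := by
  constructor
  · intro h i
    have h0 : hM.eigenvalues i ^ 2 = 0 * hM.eigenvalues i := by
      have := (mul_self_eq_smul_iff hM 0).mp (by rw [h]; simp)
      simpa using this i
    have := pow_eq_zero_iff (n := 2) (by norm_num) |>.mp (by rw [h0]; ring)
    exact this
  · intro h
    set U := (hM.eigenvectorUnitary : Matrix n n ℂ) with hU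
    set D := Matrix.diagonal ((↑) ∘ hM.eigenvalues : n → ℂ) with hD
    have hspec : M = U * D * star U := hM.spectral_theorem
    have hD0 : D = 0 := by
      rw [hD]
      ext i j
      by_cases hij : i = j <;> simp [Matrix.diagonal, hij, h]
    rw [hspec, hD0]
    simp

lemma smul_sub_mul_self_posSemidef (hM : M.PosSemidef) {c : ℝ}
    (h : ((c:ℂ) • (1 : Matrix n n ℂ) - M).PosSemidef) :
    ((c:ℂ) • M - M * M).PosSemidef := by
  set S := CFC.sqrt M with hS
  have hSh : Sᴴ = S := (CFC.sqrt_nonneg M).posSemidef.1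
  have hSS : S * S = M := CFC.sqrt_mul_sqrt_self M hM.nonneg
  have key : (c:ℂ) • M - M * M = S * ((c:ℂ) • (1 : Matrix n n ℂ) - M) * S := by
    rw [Matrix.mul_sub, Matrix.sub_mul]
    congr 1
    · rw [Matrix.mul_smul, Matrix.smul_mul, Matrix.mul_one, hSS]
    · calc M * M = (S * S) * (S * S) := by rw [hSS]
      _ = S * (S * S) * S := by noncomm_ring
      _ = S * M * S := by rw [hSS]
  rw [key]
  have := h.conjTranspose_mul_mul_same S
  rwa [hSh] at this

lemma re_ofNonneg {z : ℂ} (h : 0 ≤ z) : ((z.re : ℝ) : ℂ) = z := by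
  rw [Complex.nonneg_iff] at h
  exact Complex.ext (by simp) (by simp [h.2.symm])

lemma mul_self_posSemidef (hM : M.PosSemidef) : (M * M).PosSemidef := by
  have : M * M = Mᴴ * M := by rw [hM.1]
  rw [this]
  exact Matrix.posSemidef_conjTranspose_mul_self M

lemma key_ineq (hρ : ρ.PosDef) (hM : M.PosSemidef) (hM0 : M ≠ 0) {c : ℝ}
    (hc : ((c:ℂ) • M - M * M).PosSemidef) :
    ((ρ * (M * M)).trace / (ρ * M).trace).re ≤ c ∧
    (((ρ * (M * M)).trace / (ρ * M).trace).re = c ↔ M * M = (c:ℂ) • M) := by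
  have hr0 : 0 ≤ (ρ * M).trace := trace_mul_nonneg' hρ.posSemidef hM
  have hrne : (ρ * M).trace ≠ 0 := fun h => hM0 ((trace_mul_eq_zero_iff' hρ hM).mp h)
  have hs0 : 0 ≤ (ρ * (M * M)).trace :=
    trace_mul_nonneg' hρ.posSemidef (mul_self_posSemidef hM)
  obtain ⟨r, hrr⟩ : ∃ r : ℝ, ((r : ℝ) : ℂ) = (ρ * M).trace := ⟨_, re_ofNonneg hr0⟩
  obtain ⟨s, hss⟩ : ∃ s : ℝ, ((s : ℝ) : ℂ) = (ρ * (M * M)).trace := ⟨_, re_ofNonneg hs0⟩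
  have hrnn : 0 ≤ r := by
    have := (Complex.nonneg_iff.mp hr0).1
    rw [← hrr] at this
    simpa using this
  have hsnn : 0 ≤ s := by
    have := (Complex.nonneg_iff.mp hs0).1
    rw [← hss] at this
    simpa using this
  have hrpos : 0 < r := by
    rcases hrnn.lt_or_eq with h | h
    · exact h
    · exact absurd (by rw [← hrr, ← h, Complex.ofReal_zero]) hrne
  have hexpand : (ρ * ((c:ℂ) • M - M * M)).trace
      = (c:ℂ) * (ρ * M).trace - (ρ * (M * M)).trace := by
    rw [Matrix.mul_sub, Matrix.trace_sub, Matrix.mul_smul, Matrix.trace_smul, smul_eq_mul,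
      ← Matrix.mul_assoc]
  have hdiff : 0 ≤ (c:ℂ) * (ρ * M).trace - (ρ * (M * M)).trace := by
    rw [← hexpand]
    exact trace_mul_nonneg' hρ.posSemidef hc
  have hsle : s ≤ c * r := by
    have h1 := (Complex.nonneg_iff.mp hdiff).1
    rw [← hrr, ← hss, ← Complex.ofReal_mul, ← Complex.ofReal_sub, Complex.ofReal_re] at h1
    linarith
  have hratio : ((ρ * (M * M)).trace / (ρ * M).trace).re = s / r := by
    rw [← hrr, ← hss, ← Complex.ofReal_div, Complex.ofReal_re]
  have hzero : ((ρ * ((c:ℂ) • M - M * M)).trace = 0) ↔ s = c * r := by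
    rw [hexpand, ← hrr, ← hss, ← Complex.ofReal_mul, ← Complex.ofReal_sub,
      Complex.ofReal_eq_zero]
    constructor <;> intro h <;> linarith
  constructor
  · rw [hratio]
    exact (div_le_iff₀ hrpos).mpr (by linarith)
  · rw [hratio]
    constructor
    · intro h
      have hseq : s = c * r := by
        rw [div_eq_iff (ne_of_gt hrpos)] at h
        linarith [h]
      have h0 := (trace_mul_eq_zero_iff' hρ hc).mp (hzero.mpr hseq)
      exact (sub_eq_zero.mp h0).symm
    · intro h
      have h0 : (c:ℂ) • M - M * M = 0 := by rw [h]; simp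
      have hseq : s = c * r := hzero.mp (by rw [h0]; simp)
      rw [hseq]
      field_simp

lemma vec_lemma {f : n → ℝ} (hnn : ∀ i, 0 ≤ f i) (hne : ∃ i, f i ≠ 0) :
    (∀ i, f i ^ 2 = (∑ k, f k) * f i) ↔ Fintype.card {i // f i ≠ 0} = 1 := by
  classical
  set c := ∑ k, f k with hc
  have hcpos : 0 < c := by
    obtain ⟨i0, hi0⟩ := hne
    exact Finset.sum_pos' (fun i _ => hnn i)
      ⟨i0, Finset.mem_univ i0, lt_of_le_of_ne (hnn i0) (Ne.symm hi0)⟩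
  rw [Fintype.card_subtype]
  have hfilter_sum : ∑ i ∈ Finset.univ.filter (fun i => f i ≠ 0), f i = c := by
    rw [hc]
    exact Finset.sum_filter_ne_zero Finset.univ
  constructor
  · intro h
    have halt : ∀ i, f i = 0 ∨ f i = c := by
      intro i
      have h1 : f i * (f i - c) = 0 := by
        have := h i
        ring_nf
        ring_nf at this
        linarith
      rcases mul_eq_zero.mp h1 with h2 | h2
      · exact Or.inl h2
      · exact Or.inr (by linarith)
    have hsum : c = ((Finset.univ.filter (fun i => f i ≠ 0)).card : ℝ) * c := by
      conv_lhs => rw [← hfilter_sum]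
      rw [Finset.sum_congr rfl (fun i hi => ?_), Finset.sum_const, nsmul_eq_mul]
      rcases halt i with h2 | h2
      · exact absurd h2 (Finset.mem_filter.mp hi).2
      · exact h2
    have : ((Finset.univ.filter (fun i => f i ≠ 0)).card : ℝ) = 1 := by
      have h3 : ((Finset.univ.filter (fun i => f i ≠ 0)).card : ℝ) * c = 1 * c := by
        linarith [hsum]
      exact mul_right_cancel₀ (ne_of_gt hcpos) h3
    exact_mod_cast this
  · intro h i
    obtain ⟨a, ha⟩ : ∃ a, Finset.univ.filter (fun i => f i ≠ 0) = {a} :=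
      Finset.card_eq_one.mp h
    have hca : c = f a := by
      rw [← hfilter_sum, ha, Finset.sum_singleton]
    by_cases hi : f i = 0
    · rw [hi]; ring
    · have : i ∈ Finset.univ.filter (fun j => f j ≠ 0) := Finset.mem_filter.mpr ⟨Finset.mem_univ i, hi⟩
      rw [ha, Finset.mem_singleton] at this
      subst this
      rw [← hca]
      ring

lemma rank_one_iff (hM : M.PosSemidef) (hM0 : M ≠ 0) :
    M * M = ((M.trace.re : ℝ) : ℂ) • M ↔ M.rank = 1 := by
  have hH := hM.isHermitian
  have htr : M.trace.re = ∑ i, hH.eigenvalues i := by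
    have := trace_eq_sum_eig hH
    rw [this]
    push_cast
    simp
  have hne : ∃ i, hH.eigenvalues i ≠ 0 := by
    by_contra h
    push_neg at h
    exact hM0 ((eq_zero_iff_eig_zero hH).mpr h)
  rw [mul_self_eq_smul_iff hH, hH.rank_eq_card_non_zero_eigs, htr]
  exact vec_lemma (fun i => hM.eigenvalues_nonneg i) hne

lemma sum_posSemidef {ι : Type*} (s : Finset ι) (f : ι → Matrix n n ℂ)
    (h : ∀ i ∈ s, (f i).PosSemidef) : (∑ i ∈ s, f i).PosSemidef := by
  classical
  induction s using Finset.induction_on with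
  | empty => simpa using Matrix.PosSemidef.zero
  | insert _ _ hnotmem ih =>
    rename_i a t
    rw [Finset.sum_insert hnotmem]
    exact (h a (Finset.mem_insert_self a t)).add
      (ih fun i hi => h i (Finset.mem_insert_of_mem hi))

lemma sum_psd_eq_zero {ι : Type*} {s : Finset ι} {f : ι → Matrix n n ℂ}
    (h : ∀ i ∈ s, (f i).PosSemidef) (hsum : ∑ i ∈ s, f i = 0) :
    ∀ i ∈ s, f i = 0 := by
  intro i hi
  have htr : ∑ k ∈ s, (f k).trace = 0 := by
    rw [← Matrix.trace_sum, hsum, Matrix.trace_zero]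
  have hterm : (f i).trace = 0 :=
    (Finset.sum_eq_zero_iff_of_nonneg (fun k hk => trace_nonneg' (h k hk))).mp htr i hi
  exact (trace_eq_zero_iff' (h i hi)).mp hterm

lemma proj_orthogonal {m : ℕ} (A : Fin m → Matrix n n ℂ)
    (hpsd : ∀ j, (A j).PosSemidef) (hsum : ∑ j, A j = 1)
    (hidem : ∀ j, A j * A j = A j) : ∀ j k, j ≠ k → A j * A k = 0 := by
  have main : ∀ j k, j ≠ k → A k * A j = 0 := by
    intro j k hjk
    have hexp : ∑ k0, A j * A k0 * A j = A j := by
      calc ∑ k0, A j * A k0 * A j = A j * (∑ k0, A k0) * A j := by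
            rw [Finset.mul_sum, Finset.sum_mul]
      _ = A j := by rw [hsum, Matrix.mul_one, hidem j]
    have hsplit : A j * A j * A j + ∑ k0 ∈ Finset.univ.erase j, A j * A k0 * A j = A j := by
      rw [Finset.add_sum_erase Finset.univ (fun k0 => A j * A k0 * A j) (Finset.mem_univ j)]
      exact hexp
    have hjjj : A j * A j * A j = A j := by rw [hidem j, hidem j]
    have hzero : ∑ k0 ∈ Finset.univ.erase j, A j * A k0 * A j = 0 := by
      rw [hjjj] at hsplit
      linear_combination (norm := noncomm_ring) hsplit
    have hpsd' : ∀ k0 ∈ Finset.univ.erase j, (A j * A k0 * A j).PosSemidef := by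
      intro k0 _
      have := (hpsd k0).conjTranspose_mul_mul_same (A j)
      rwa [(hpsd j).1] at this
    have hk0 : A j * A k * A j = 0 :=
      sum_psd_eq_zero hpsd' hzero k (Finset.mem_erase.mpr ⟨hjk.symm, Finset.mem_univ k⟩)
    set S := CFC.sqrt (A k) with hS
    have hSh : Sᴴ = S := (CFC.sqrt_nonneg (A k)).posSemidef.1
    have hSS : S * S = A k := CFC.sqrt_mul_sqrt_self (A k) (hpsd k).nonneg
    have hSA : (S * A j)ᴴ * (S * A j) = 0 := by
      rw [Matrix.conjTranspose_mul, hSh, (hpsd j).1]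
      calc A j * S * (S * A j) = A j * (S * S) * A j := by noncomm_ring
      _ = A j * A k * A j := by rw [hSS]
      _ = 0 := hk0
    have hSA0 : S * A j = 0 := Matrix.conjTranspose_mul_self_eq_zero.mp hSA
    calc A k * A j = S * (S * A j) := by rw [← Matrix.mul_assoc, hSS]
    _ = 0 := by rw [hSA0, Matrix.mul_zero]
  intro j k hjk
  exact main k j hjk.symm

end Helpers

open scoped Classical in
/-- Generalized Gill–Massar bound: `Σ_{j : A_j ≠ 0} tr(ρ A_j²)/tr(ρ A_j) ≤ min(m, d)`,
with the stated saturation conditions. -/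
theorem stmt_7 {d m : ℕ}
    (ρ : Matrix (Fin d) (Fin d) ℂ) (hρ : ρ.PosDef) (hρtr : ρ.trace = 1)
    (A : Fin m → Matrix (Fin d) (Fin d) ℂ) (hA : IsPOVM A) :
    (∑ j ∈ Finset.univ.filter (fun j => A j ≠ 0),
        ((ρ * (A j * A j)).trace / (ρ * A j).trace).re ≤ min (m : ℝ) (d : ℝ)) ∧
    (m ≤ d →
      ((∑ j ∈ Finset.univ.filter (fun j => A j ≠ 0),
          ((ρ * (A j * A j)).trace / (ρ * A j).trace).re = (m : ℝ)) ↔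
        (IsPVM A ∧ ∀ j, A j ≠ 0))) ∧
    (d ≤ m →
      ((∑ j ∈ Finset.univ.filter (fun j => A j ≠ 0),
          ((ρ * (A j * A j)).trace / (ρ * A j).trace).re = (d : ℝ)) ↔
        (∀ j, A j ≠ 0 → (A j).rank = 1))) := by
  obtain ⟨hpsd, hsum⟩ := hA
  set t : Fin m → ℝ := fun j => ((ρ * (A j * A j)).trace / (ρ * A j).trace).re with ht
  set F := Finset.univ.filter (fun j => A j ≠ 0) with hF
  -- per-element bound by 1
  have hone : ∀ j, A j ≠ 0 → (t j ≤ 1 ∧ (t j = 1 ↔ A j * A j = A j)) := by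
    intro j hj
    have hsub : ((1:ℝ):ℂ) • (1 : Matrix (Fin d) (Fin d) ℂ) - A j
        = ∑ k ∈ Finset.univ.erase j, A k := by
      have h1 : A j + ∑ k ∈ Finset.univ.erase j, A k = 1 := by
        rw [Finset.add_sum_erase Finset.univ A (Finset.mem_univ j)]
        exact hsum
      rw [Complex.ofReal_one, one_smul]
      linear_combination (norm := abel) h1.symm
    have hpsd1 : (((1:ℝ):ℂ) • (1 : Matrix (Fin d) (Fin d) ℂ) - A j).PosSemidef := by
      rw [hsub]
      exact sum_posSemidef _ _ (fun k _ => hpsd k)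
    have hc := smul_sub_mul_self_posSemidef (hpsd j) hpsd1
    have hk := key_ineq hρ (hpsd j) hj hc
    refine ⟨hk.1, hk.2.trans ?_⟩
    rw [Complex.ofReal_one, one_smul]
  -- per-element bound by trace
  have htwo : ∀ j, A j ≠ 0 →
      (t j ≤ (A j).trace.re ∧ (t j = (A j).trace.re ↔ (A j).rank = 1)) := by
    intro j hj
    have heig : ∀ i, (hpsd j).1.eigenvalues i ≤ (A j).trace.re := by
      intro i
      have h1 : (A j).trace.re = ∑ k, (hpsd j).1.eigenvalues k := by
        rw [trace_eq_sum_eig (hpsd j).1, Complex.re_sum]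
        simp
      rw [h1]
      exact Finset.single_le_sum (fun k _ => (hpsd j).eigenvalues_nonneg k) (Finset.mem_univ i)
    have hpsd1 := smul_one_sub_posSemidef (hpsd j).1 heig
    have hc := smul_sub_mul_self_posSemidef (hpsd j) hpsd1
    have hk := key_ineq hρ (hpsd j) hj hc
    exact ⟨hk.1, hk.2.trans (rank_one_iff (hpsd j) hj)⟩
  -- trace sum
  have hsum_c : ∑ j ∈ F, (A j).trace.re = (d : ℝ) := by
    have h1 : ∑ j ∈ F, (A j).trace.re = ∑ j, (A j).trace.re := by
      refine Finset.sum_subset (Finset.subset_univ F) (fun j _ hj => ?_)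
      have hj0 : A j = 0 := by
        by_contra h0
        exact hj (Finset.mem_filter.mpr ⟨Finset.mem_univ j, h0⟩)
      rw [hj0]
      simp
    rw [h1, ← Complex.re_sum, ← Matrix.trace_sum, hsum, Matrix.trace_one]
    simp
  -- bounds
  have hboundm : ∑ j ∈ F, t j ≤ (m : ℝ) := by
    calc ∑ j ∈ F, t j ≤ ∑ j ∈ F, (1:ℝ) :=
          Finset.sum_le_sum (fun j hj => (hone j (Finset.mem_filter.mp hj).2).1)
    _ = (F.card : ℝ) := by simp
    _ ≤ (m : ℝ) := by
          have := Finset.card_le_univ F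
          simp only [Finset.card_univ, Fintype.card_fin] at this
          exact_mod_cast this
  have hboundd : ∑ j ∈ F, t j ≤ (d : ℝ) := by
    calc ∑ j ∈ F, t j ≤ ∑ j ∈ F, (A j).trace.re :=
          Finset.sum_le_sum (fun j hj => (htwo j (Finset.mem_filter.mp hj).2).1)
    _ = (d : ℝ) := hsum_c
  refine ⟨le_min hboundm hboundd, fun _ => ⟨?_, ?_⟩, fun _ => ⟨?_, ?_⟩⟩
  · -- sum = m → PVM & all nonzero
    intro hS
    have hcard_ge : (m : ℝ) ≤ (F.card : ℝ) := by
      calc (m:ℝ) = ∑ j ∈ F, t j := hS.symm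
      _ ≤ ∑ j ∈ F, (1:ℝ) :=
          Finset.sum_le_sum (fun j hj => (hone j (Finset.mem_filter.mp hj).2).1)
      _ = (F.card : ℝ) := by simp
    have hcard : F.card = m := by
      have h1 := Finset.card_le_univ F
      simp only [Finset.card_univ, Fintype.card_fin] at h1
      have h2 : m ≤ F.card := by exact_mod_cast hcard_ge
      omega
    have hFuniv : F = Finset.univ := Finset.eq_univ_of_card F (by simpa using hcard)
    have hall : ∀ j, A j ≠ 0 := by
      intro j
      have : j ∈ F := hFuniv ▸ Finset.mem_univ j
      exact (Finset.mem_filter.mp this).2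
    have hterms : ∀ j ∈ F, t j = 1 := by
      refine (Finset.sum_eq_sum_iff_of_le
        (fun j hj => (hone j (Finset.mem_filter.mp hj).2).1)).mp ?_
      rw [hS]
      simp [← hF, hcard]
    have hidem : ∀ j, A j * A j = A j := by
      intro j
      exact (hone j (hall j)).2.mp (hterms j (hFuniv ▸ Finset.mem_univ j))
    exact ⟨⟨⟨hpsd, hsum⟩, hidem, proj_orthogonal A hpsd hsum hidem⟩, hall⟩
  · -- PVM & all nonzero → sum = m
    rintro ⟨⟨_, hidem, _⟩, hall⟩
    have hFuniv : F = Finset.univ :=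
      Finset.eq_univ_iff_forall.mpr (fun j => Finset.mem_filter.mpr ⟨Finset.mem_univ j, hall j⟩)
    have hterms : ∀ j, t j = 1 := fun j => (hone j (hall j)).2.mpr (hidem j)
    rw [hFuniv]
    simp [hterms]
  · -- sum = d → rank one
    intro hS j hj
    have hjF : j ∈ F := Finset.mem_filter.mpr ⟨Finset.mem_univ j, hj⟩
    have hterms : ∀ k ∈ F, t k = (A k).trace.re := by
      refine (Finset.sum_eq_sum_iff_of_le
        (fun k hk => (htwo k (Finset.mem_filter.mp hk).2).1)).mp ?_
      rw [hS, hsum_c]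
    exact (htwo j hj).2.mp (hterms j hjF)
  · -- rank one → sum = d
    intro hr
    have : ∑ j ∈ F, t j = ∑ j ∈ F, (A j).trace.re := by
      refine Finset.sum_congr rfl (fun j hj => ?_)
      have hj0 := (Finset.mem_filter.mp hj).2
      exact (htwo j hj0).2.mpr (hr j hj0)
    rw [this, hsum_c]
end

section
/- Let ρ be a state on ℂ^d and A = (A_1, …, A_m) a POVM with all elements nonzero. Define S(C) = (ρC + Cρ)/2, which is invertible. Then for every d×d complex matrix C: Σ_j |tr(A_j C)|²/tr(ρ A_j) ≤ Re ⟪C, S⁻¹(C)⟫, Σ_j |tr(A_j C)|²/tr(ρ A_j) ≤ tr(Cᴴ ρ⁻¹ C), and Σ_j |tr(A_j C)|²/tr(ρ A_j) ≤ tr(Cᴴ C ρ⁻¹) (i.e., the Fisher superoperator F(ρ,A) is dominated by each of the inverse superoperators S⁻¹, L⁻¹, R⁻¹ in the sense of quadratic forms). -/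
open Matrix
open scoped ComplexOrder

open scoped MatrixOrder

/-! Write `F(C) = Σ_j |tr(A_j C)|² / tr(ρ A_j)`. For each `j`, `(X, Y) ↦ tr(A_j Y ρ⁻¹ Xᴴ)` is a
positive semidefinite sesquilinear form, and `tr(A_j C)` is its value at `(ρ, C)`; Cauchy–Schwarz and
`Σ_j A_j = 1` give `F(C) ≤ tr(Cᴴ C ρ⁻¹)`. Since `F(Cᴴ) = F(C)`, also `F(C) ≤ tr(Cᴴ ρ⁻¹ C)`.
For `C = S(D) = (ρD + Dρ)/2`, convexity of `F` gives
`F(C) ≤ (F(ρD) + F(Dρ))/2 ≤ (tr(Dᴴ ρ D) + tr(ρ Dᴴ D))/2 = Re tr(Cᴴ D)`. -/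

theorem norm_inner_sq_div_le {𝕜 E : Type*} [RCLike 𝕜] [SeminormedAddCommGroup E]
    [InnerProductSpace 𝕜 E] (x y : E) : ‖inner 𝕜 x y‖ ^ 2 / ‖x‖ ^ 2 ≤ ‖y‖ ^ 2 :=
  div_le_of_le_mul₀ (sq_nonneg _) (sq_nonneg _) <| by
    rw [← mul_pow, mul_comm]
    exact pow_le_pow_left₀ (norm_nonneg _) (norm_inner_le_norm x y) 2

namespace Matrix

variable {n : Type*} [Fintype n]

theorem PosSemidef.norm_trace_sq_div_le {A Q : Matrix n n ℂ} (hA : A.PosSemidef)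
    (hQ : Q.PosSemidef) (X Y : Matrix n n ℂ) :
    ‖(A * Y * Q * Xᴴ).trace‖ ^ 2 / (A * X * Q * Xᴴ).trace.re ≤ (A * Y * Q * Yᴴ).trace.re := by
  classical
  obtain ⟨b, rfl⟩ := CStarAlgebra.nonneg_iff_eq_star_mul_self.mp hA.nonneg
  let := Q.toMatrixSeminormedAddCommGroup hQ
  let := Q.toMatrixInnerProductSpace hQ
  have hcs := norm_inner_sq_div_le (𝕜 := ℂ) (b * X) (b * Y)
  rw [norm_sq_eq_re_inner (𝕜 := ℂ) (b * X), norm_sq_eq_re_inner (𝕜 := ℂ) (b * Y)] at hcs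
  have htrace : ∀ Z W : Matrix n n ℂ, (star b * b * Z * Q * Wᴴ).trace = inner ℂ (b * W) (b * Z) := by
    intro Z W
    change _ = (b * Z * Q * (b * W)ᴴ).trace
    calc (star b * b * Z * Q * Wᴴ).trace = (bᴴ * (b * Z * Q * Wᴴ)).trace := by
          simp only [star_eq_conjTranspose, Matrix.mul_assoc]
      _ = (b * Z * Q * Wᴴ * bᴴ).trace := trace_mul_comm _ _
      _ = (b * Z * Q * (b * W)ᴴ).trace := by simp only [conjTranspose_mul, Matrix.mul_assoc]
  simpa only [htrace, RCLike.re_to_complex] using hcs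

theorem PosSemidef.re_trace_mul_nonneg {P A : Matrix n n ℂ} (hP : P.PosSemidef)
    (hA : A.PosSemidef) : 0 ≤ (P * A).trace.re := by
  classical
  obtain ⟨b, rfl⟩ := CStarAlgebra.nonneg_iff_eq_star_mul_self.mp hA.nonneg
  rw [← Matrix.mul_assoc, trace_mul_comm, ← Matrix.mul_assoc, star_eq_conjTranspose]
  exact (Complex.nonneg_iff.mp (hP.mul_mul_conjTranspose_same b).trace_nonneg).1

end Matrix

open Matrix

variable {n ι : Type*} [Fintype n] [Fintype ι]

noncomputable def fisherForm (ρ : Matrix n n ℂ) (A : ι → Matrix n n ℂ) (C : Matrix n n ℂ) : ℝ :=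
  ∑ j, ‖(A j * C).trace‖ ^ 2 / (ρ * A j).trace.re

theorem fisherForm_conjTranspose (ρ : Matrix n n ℂ) {A : ι → Matrix n n ℂ}
    (hA : ∀ j, (A j).IsHermitian) (C : Matrix n n ℂ) : fisherForm ρ A Cᴴ = fisherForm ρ A C := by
  refine Finset.sum_congr rfl fun j _ => ?_
  rw [← (hA j).eq, ← conjTranspose_mul, trace_conjTranspose, (hA j).eq, trace_mul_comm,
    norm_star]

theorem fisherForm_midpoint_le {ρ : Matrix n n ℂ} {A : ι → Matrix n n ℂ} (hρ : ρ.PosSemidef)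
    (hA : ∀ j, (A j).PosSemidef) (X Y : Matrix n n ℂ) :
    fisherForm ρ A ((2⁻¹ : ℂ) • (X + Y)) ≤ 2⁻¹ * (fisherForm ρ A X + fisherForm ρ A Y) := by
  rw [fisherForm, fisherForm, fisherForm, ← Finset.sum_add_distrib, Finset.mul_sum]
  refine Finset.sum_le_sum fun j _ => ?_
  have hw := hρ.re_trace_mul_nonneg (hA j)
  set a := (A j * X).trace
  set b := (A j * Y).trace
  have hab : ‖(A j * ((2⁻¹ : ℂ) • (X + Y))).trace‖ ^ 2 ≤ 2⁻¹ * (‖a‖ ^ 2 + ‖b‖ ^ 2) := by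
    rw [Matrix.mul_smul, Matrix.mul_add, trace_smul, trace_add, smul_eq_mul, norm_mul, norm_inv,
      Complex.norm_two]
    have := norm_add_le a b
    nlinarith [sq_nonneg (‖a‖ - ‖b‖), norm_nonneg (a + b)]
  calc ‖(A j * ((2⁻¹ : ℂ) • (X + Y))).trace‖ ^ 2 / (ρ * A j).trace.re
      ≤ 2⁻¹ * (‖a‖ ^ 2 + ‖b‖ ^ 2) / (ρ * A j).trace.re := by gcongr
    _ = _ := by ring

variable [DecidableEq n] {ρ : Matrix n n ℂ} {A : ι → Matrix n n ℂ}

theorem fisherForm_le_trace_mul_inv (hρ : ρ.PosDef) (hA : ∀ j, (A j).PosSemidef)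
    (hsum : ∑ j, A j = 1) (C : Matrix n n ℂ) :
    fisherForm ρ A C ≤ (Cᴴ * (C * ρ⁻¹)).trace.re := by
  have hinv : ρ⁻¹ * ρ = 1 := nonsing_inv_mul ρ ((isUnit_iff_isUnit_det ρ).mp hρ.isUnit)
  calc fisherForm ρ A C ≤ ∑ j, (A j * (C * ρ⁻¹ * Cᴴ)).trace.re := by
        refine Finset.sum_le_sum fun j _ => ?_
        have h := (hA j).norm_trace_sq_div_le hρ.inv.posSemidef ρ C
        rw [hρ.isHermitian.eq, Matrix.mul_assoc (A j * C), Matrix.mul_assoc (A j * ρ), hinv,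
          Matrix.mul_one, Matrix.mul_one, trace_mul_comm (A j) ρ] at h
        simpa only [Matrix.mul_assoc] using h
    _ = (Cᴴ * (C * ρ⁻¹)).trace.re := by
        rw [← Complex.re_sum, ← trace_sum, ← Finset.sum_mul, hsum, Matrix.one_mul, trace_mul_comm]

theorem fisherForm_le_trace_inv_mul (hρ : ρ.PosDef) (hA : ∀ j, (A j).PosSemidef)
    (hsum : ∑ j, A j = 1) (C : Matrix n n ℂ) :
    fisherForm ρ A C ≤ (Cᴴ * (ρ⁻¹ * C)).trace.re := by
  rw [← fisherForm_conjTranspose ρ (fun j => (hA j).isHermitian)]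
  calc fisherForm ρ A Cᴴ ≤ (Cᴴᴴ * (Cᴴ * ρ⁻¹)).trace.re := fisherForm_le_trace_mul_inv hρ hA hsum _
    _ = (Cᴴ * (ρ⁻¹ * C)).trace.re := by
        rw [conjTranspose_conjTranspose, trace_mul_comm Cᴴ, ← Matrix.mul_assoc,
          trace_mul_comm (C * Cᴴ)]
        simp only [Matrix.mul_assoc]

theorem fisherForm_le_of_symmetrized (hρ : ρ.PosDef) (hA : ∀ j, (A j).PosSemidef)
    (hsum : ∑ j, A j = 1) {C D : Matrix n n ℂ} (hCD : (2⁻¹ : ℂ) • (ρ * D + D * ρ) = C) :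
    fisherForm ρ A C ≤ (Cᴴ * D).trace.re := by
  have hdet := (isUnit_iff_isUnit_det ρ).mp hρ.isUnit
  have hL : fisherForm ρ A (ρ * D) ≤ (Dᴴ * (ρ * D)).trace.re := by
    simpa [conjTranspose_mul, hρ.isHermitian.eq, ← Matrix.mul_assoc, nonsing_inv_mul ρ hdet]
      using fisherForm_le_trace_inv_mul hρ hA hsum (ρ * D)
  have hR : fisherForm ρ A (D * ρ) ≤ (ρ * Dᴴ * D).trace.re := by
    simpa [conjTranspose_mul, hρ.isHermitian.eq, Matrix.mul_assoc, mul_nonsing_inv ρ hdet]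
      using fisherForm_le_trace_mul_inv hρ hA hsum (D * ρ)
  subst hCD
  have hRHS : (((2⁻¹ : ℂ) • (ρ * D + D * ρ))ᴴ * D).trace.re =
      2⁻¹ * ((Dᴴ * (ρ * D)).trace.re + (ρ * Dᴴ * D).trace.re) := by
    simp [conjTranspose_mul, hρ.isHermitian.eq, Matrix.add_mul, Matrix.mul_assoc, mul_add]
  rw [hRHS]
  have := fisherForm_midpoint_le hρ.posSemidef hA (ρ * D) (D * ρ)
  linarith

theorem stmt_9_general {d m : ℕ}
    (ρ : Matrix (Fin d) (Fin d) ℂ) (hρ : ρ.PosDef)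
    (A : Fin m → Matrix (Fin d) (Fin d) ℂ)
    (hA : IsPOVM A)
    (C : Matrix (Fin d) (Fin d) ℂ) :
    (∀ T : Matrix (Fin d) (Fin d) ℂ →ₗ[ℂ] Matrix (Fin d) (Fin d) ℂ,
      (∀ X, (2⁻¹ : ℂ) • (ρ * T X + T X * ρ) = X) →
      ∑ j, ‖(A j * C).trace‖ ^ 2 / ((ρ * A j).trace).re ≤
        ((Cᴴ * T C).trace).re) ∧
    (∑ j, ‖(A j * C).trace‖ ^ 2 / ((ρ * A j).trace).re ≤
      ((Cᴴ * (ρ⁻¹ * C)).trace).re) ∧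
    (∑ j, ‖(A j * C).trace‖ ^ 2 / ((ρ * A j).trace).re ≤
      ((Cᴴ * (C * ρ⁻¹)).trace).re) := by
  obtain ⟨hpsd, hsum⟩ := hA
  exact ⟨fun T hT => fisherForm_le_of_symmetrized hρ hpsd hsum (hT C),
    fisherForm_le_trace_inv_mul hρ hpsd hsum C, fisherForm_le_trace_mul_inv hρ hpsd hsum C⟩

/-- The Fisher superoperator is dominated by `S⁻¹`, `L⁻¹` and `R⁻¹` as quadratic
forms: for every matrix `C`, `Σ_j |tr(A_j C)|²/tr(ρ A_j)` is at most
`Re ⟪C, S⁻¹(C)⟫`, `tr(Cᴴ ρ⁻¹ C)` and `tr(Cᴴ C ρ⁻¹)`. -/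
theorem stmt_9 {d m : ℕ}
    (ρ : Matrix (Fin d) (Fin d) ℂ) (hρ : ρ.PosDef) (hρtr : ρ.trace = 1)
    (A : Fin m → Matrix (Fin d) (Fin d) ℂ)
    (hA : IsPOVM A) (hA0 : ∀ j, A j ≠ 0)
    (C : Matrix (Fin d) (Fin d) ℂ) :
    (∀ T : Matrix (Fin d) (Fin d) ℂ →ₗ[ℂ] Matrix (Fin d) (Fin d) ℂ,
      (∀ X, (2⁻¹ : ℂ) • (ρ * T X + T X * ρ) = X) →
      ∑ j, ‖(A j * C).trace‖ ^ 2 / ((ρ * A j).trace).re ≤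
        ((Cᴴ * T C).trace).re) ∧
    (∑ j, ‖(A j * C).trace‖ ^ 2 / ((ρ * A j).trace).re ≤
      ((Cᴴ * (ρ⁻¹ * C)).trace).re) ∧
    (∑ j, ‖(A j * C).trace‖ ^ 2 / ((ρ * A j).trace).re ≤
      ((Cᴴ * (C * ρ⁻¹)).trace).re) :=
  stmt_9_general ρ hρ A hA C
end

section
/- Suppose ℂ^d is the internal direct sum of subspaces V_1, …, V_m (the V_j are independent and span ℂ^d, not assumed mutually orthogonal), and (A_1, …, A_m) is a POVM on ℂ^d such that the range of A_j is contained in V_j for every j. Then the subspaces V_1, …, V_m are pairwise orthogonal and each A_j is the orthogonal projection onto V_j; in particular (A_1, …, A_m) is a PVM. -/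
open Matrix
open scoped ComplexOrder

lemma aux_sum_zero {m : ℕ} {M : Type*} [AddCommGroup M] [Module ℂ M]
    {V : Fin m → Submodule ℂ M} (hindep : iSupIndep V) (f : Fin m → M)
    (hf : ∀ j, f j ∈ V j) (hsum : ∑ j, f j = 0) : ∀ j, f j = 0 := by
  intro j
  have h1 : f j = -∑ k ∈ Finset.univ.erase j, f k := by
    rw [← Finset.sum_erase_add _ _ (Finset.mem_univ j)] at hsum
    exact (neg_eq_of_add_eq_zero_right hsum).symm
  have h2 : f j ∈ ⨆ (k) (_ : k ≠ j), V k := by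
    rw [h1]
    exact Submodule.neg_mem _ (Submodule.sum_mem _ fun k hk =>
      Submodule.mem_iSup_of_mem k (Submodule.mem_iSup_of_mem
        (Finset.ne_of_mem_erase hk) (hf k)))
  exact Submodule.disjoint_def.mp (hindep j) _ (hf j) h2

lemma aux_ext {d : ℕ} {A B : Matrix (Fin d) (Fin d) ℂ}
    (h : ∀ v, A *ᵥ v = B *ᵥ v) : A = B := by
  ext i j
  have := congrFun (h (Pi.single j 1)) i
  simpa [Matrix.mulVec_single] using this

/-- If `ℂ^d` is the internal direct sum of subspaces `V_j` and the range of each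
POVM element `A_j` is contained in `V_j`, then the `V_j` are pairwise orthogonal
and each `A_j` is the orthogonal projection onto `V_j`; in particular `A` is a
PVM. -/
theorem stmt_12 {d m : ℕ}
    (V : Fin m → Submodule ℂ (Fin d → ℂ))
    (hindep : iSupIndep V)
    (hspan : ⨆ j, V j = ⊤)
    (A : Fin m → Matrix (Fin d) (Fin d) ℂ) (hA : IsPOVM A)
    (hrange : ∀ j, LinearMap.range (A j).mulVecLin ≤ V j) :
    (∀ j k, j ≠ k → ∀ x ∈ V j, ∀ y ∈ V k, ∑ i, star (x i) * y i = 0) ∧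
    (∀ j, (A j).IsHermitian ∧ A j * A j = A j ∧
      LinearMap.range (A j).mulVecLin = V j ∧ ∀ x ∈ V j, (A j).mulVec x = x) ∧
    IsPVM A := by
  obtain ⟨hpsd, hsum⟩ := hA
  have hmem : ∀ j (v : Fin d → ℂ), A j *ᵥ v ∈ V j := fun j v =>
    hrange j ⟨v, rfl⟩
  -- key: for x ∈ V k, A j *ᵥ x = if j = k then x else 0
  have key : ∀ k, ∀ x ∈ V k, ∀ j, A j *ᵥ x = if j = k then x else 0 := by
    intro k x hx
    set f : Fin m → (Fin d → ℂ) :=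
      fun j => A j *ᵥ x - if j = k then x else 0 with hfdef
    have hf : ∀ j, f j ∈ V j := by
      intro j
      by_cases h : j = k
      · subst h; simpa [hfdef] using Submodule.sub_mem _ (hmem j x) hx
      · simpa [hfdef, h] using hmem j x
    have hsum0 : ∑ j, f j = 0 := by
      have h1 : ∑ j, A j *ᵥ x = x := by
        have h2 : ∑ j, A j *ᵥ x = (∑ j, A j) *ᵥ x :=
          (map_sum (Matrix.mulVec.addMonoidHomLeft x) A Finset.univ).symm
        rw [h2, hsum, Matrix.one_mulVec]
      simp [hfdef, Finset.sum_sub_distrib, h1]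
    have := aux_sum_zero hindep f hf hsum0
    intro j
    have := this j
    simpa [hfdef, sub_eq_zero] using this
  have hfix : ∀ k, ∀ x ∈ V k, A k *ᵥ x = x := by
    intro k x hx; simpa using key k x hx k
  have hzero : ∀ j k, j ≠ k → ∀ x ∈ V k, A j *ᵥ x = 0 := by
    intro j k hjk x hx; simpa [hjk] using key k x hx j
  have hherm : ∀ j, (A j).IsHermitian := fun j => (hpsd j).1
  have hidem : ∀ j, A j * A j = A j := by
    intro j
    apply aux_ext
    intro v
    rw [← Matrix.mulVec_mulVec]
    exact hfix j _ (hmem j v)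
  have horth : ∀ j k, j ≠ k → A j * A k = 0 := by
    intro j k hjk
    apply aux_ext
    intro v
    rw [← Matrix.mulVec_mulVec]
    simp [hzero j k hjk _ (hmem k v)]
  refine ⟨?_, fun j => ⟨hherm j, hidem j, ?_, hfix j⟩, ⟨hpsd, hsum⟩, hidem, horth⟩
  · intro j k hjk x hx y hy
    have h1 : star x ⬝ᵥ y = 0 := by
      have hx' : A j *ᵥ x = x := hfix j x hx
      calc star x ⬝ᵥ y = star (A j *ᵥ x) ⬝ᵥ y := by rw [hx']
        _ = (star x ᵥ* (A j)ᴴ) ⬝ᵥ y := by rw [Matrix.star_mulVec]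
        _ = star x ⬝ᵥ ((A j)ᴴ *ᵥ y) := by rw [← Matrix.dotProduct_mulVec]
        _ = star x ⬝ᵥ (A j *ᵥ y) := by rw [(hherm j).eq]
        _ = 0 := by rw [hzero j k hjk y hy]; simp
    simpa [dotProduct] using h1
  · refine le_antisymm (hrange j) fun x hx => ⟨x, hfix j x hx⟩
end
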